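/- arXiv:2006.01875 — 10 statements merged into one kernel-verified Lean document; each statement's English description precedes it below -/
import Mathlib

section
/- If p ∈ C_{max,d}(n,n,m) is synchronous, then there exists a single family of PVMs (E x ·)_{x ∈ Fin n} with m outcomes on ℂ^d such that (p x y i j : ℂ) = (1/d)·Tr(E x i * E y j) for all x, y, i, j. -/
open scoped BigOperators

/-- A correlation with `nA` questions for Alice, `nB` questions for Bob and `m` outcomes. -/
def IsCorrelation {nA nB m : ℕ} (p : Fin nA → Fin nB → Fin m → Fin m → ℝ) : Prop :=
  (∀ x y i j, 0 ≤ p x y i j) ∧ ∀ x y, (∑ i, ∑ j, p x y i j) = 1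

/-- A projection-valued measure with `m` outcomes on `ℂ^d`. -/
def IsPVM {d m : ℕ} (E : Fin m → Matrix (Fin d) (Fin d) ℂ) : Prop :=
  (∀ i, (E i).IsHermitian) ∧ (∀ i, E i * E i = E i) ∧ (∑ i, E i = 1)

/-- The set `C_{max,d}(nA,nB,m)` of maximally entangled correlations in dimension `d`. -/
def CmaxD (nA nB m d : ℕ) : Set (Fin nA → Fin nB → Fin m → Fin m → ℝ) :=
  {p | IsCorrelation p ∧
    ∃ (E : Fin nA → Fin m → Matrix (Fin d) (Fin d) ℂ)
      (F : Fin nB → Fin m → Matrix (Fin d) (Fin d) ℂ),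
      (∀ x, IsPVM (E x)) ∧ (∀ y, IsPVM (F y)) ∧
      ∀ x y i j, (p x y i j : ℂ) = (1 / (d : ℂ)) * (E x i * F y j).trace}

/-- The set `C_max(nA,nB,m)` of maximally entangled correlations. -/
def Cmax (nA nB m : ℕ) : Set (Fin nA → Fin nB → Fin m → Fin m → ℝ) :=
  ⋃ (d : ℕ) (_ : 1 ≤ d), CmaxD nA nB m d

/-- A correlation with the same questions for Alice and Bob is synchronous if
`p x x i j = 0` whenever `i ≠ j`. -/
def Synchronous {n m : ℕ} (p : Fin n → Fin n → Fin m → Fin m → ℝ) : Prop :=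
  ∀ x i j, i ≠ j → p x x i j = 0

/-- The set `C_max^s(n,m)` of synchronous maximally entangled correlations. -/
def CmaxSync (n m : ℕ) : Set (Fin n → Fin n → Fin m → Fin m → ℝ) :=
  {p ∈ Cmax n n m | Synchronous p}

/-!
Synchronicity gives `Tr(E x i * F x j) = 0` for `i ≠ j`. For orthogonal projections `A`, `B`,
`Tr((AB)(AB)ᴴ) = Tr(ABA) = Tr(AB)`, so this forces `E x i * F x j = 0`; two partitions of unity
that are orthogonal off the diagonal coincide, hence `F = E` and Alice's PVMs realize `p` alone.
-/

open Matrix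
open scoped ComplexOrder

lemma eq_of_sum_eq_one_of_mul_eq_zero {ι R : Type*} [Fintype ι] [Semiring R]
    {P Q : ι → R} (hP : ∑ i, P i = 1) (hQ : ∑ i, Q i = 1)
    (h : ∀ i j, i ≠ j → P i * Q j = 0) : P = Q := by
  funext i
  have hPQ : P i * Q i = P i := by
    rw [← Fintype.sum_eq_single i fun j hj => h i j hj.symm, ← Finset.mul_sum, hQ, mul_one]
  have hPQ' : P i * Q i = Q i := by
    rw [← Fintype.sum_eq_single i fun j hj => h j i hj, ← Finset.sum_mul, hP, one_mul]
  rw [← hPQ, hPQ']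

lemma Matrix.mul_eq_zero_of_trace_mul_eq_zero {ι 𝕜 : Type*} [Fintype ι] [RCLike 𝕜]
    {A B : Matrix ι ι 𝕜} (hA : A.IsHermitian) (hB : B.IsHermitian)
    (hA₂ : IsIdempotentElem A) (hB₂ : IsIdempotentElem B) (h : (A * B).trace = 0) :
    A * B = 0 := by
  rw [← trace_mul_conjTranspose_self_eq_zero_iff, conjTranspose_mul, hA.eq, hB.eq]
  calc (A * B * (B * A)).trace = (A * A * B).trace := by
        rw [mul_assoc, ← mul_assoc B, hB₂.eq, ← mul_assoc, trace_mul_cycle]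
    _ = 0 := by rw [hA₂.eq, h]

lemma IsPVM.eq_of_trace_mul_eq_zero {d m : ℕ} {P Q : Fin m → Matrix (Fin d) (Fin d) ℂ}
    (hP : IsPVM P) (hQ : IsPVM Q) (h : ∀ i j, i ≠ j → (P i * Q j).trace = 0) : P = Q :=
  eq_of_sum_eq_one_of_mul_eq_zero hP.2.2 hQ.2.2 fun i j hij =>
    mul_eq_zero_of_trace_mul_eq_zero (hP.1 i) (hQ.1 j) (hP.2.1 i) (hQ.2.1 j) (h i j hij)

lemma Matrix.trace_eq_zero_of_one_div_dim_mul_eq_zero {d : ℕ}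
    {M : Matrix (Fin d) (Fin d) ℂ} (h : 1 / (d : ℂ) * M.trace = 0) : M.trace = 0 := by
  rcases mul_eq_zero.1 h with hd | htr
  · obtain rfl : d = 0 := by simpa using hd
    simp [trace]
  · exact htr

/-- A synchronous correlation in `C_{max,d}(n,n,m)` is realized by a single
family of PVMs: `p x y i j = (1/d) Tr(E x i * E y j)`. -/
theorem synchronous_CmaxD_single_pvm_family {n m d : ℕ}
    (p : Fin n → Fin n → Fin m → Fin m → ℝ)
    (hp : p ∈ CmaxD n n m d) (hsync : Synchronous p) :
    ∃ E : Fin n → Fin m → Matrix (Fin d) (Fin d) ℂ,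
      (∀ x, IsPVM (E x)) ∧
      ∀ x y i j, (p x y i j : ℂ) = (1 / (d : ℂ)) * (E x i * E y j).trace := by
  obtain ⟨-, E, F, hE, hF, hrep⟩ := hp
  have hEF : ∀ x, E x = F x := fun x =>
    (hE x).eq_of_trace_mul_eq_zero (hF x) fun i j hij =>
      trace_eq_zero_of_one_div_dim_mul_eq_zero <| by
        rw [← hrep, hsync x i j hij, Complex.ofReal_zero]
  exact ⟨E, hE, fun x y i j => by rw [hrep, ← hEF y]⟩
end

section
/- If p ∈ C_max(nA,nB,m), then for every x, i and every y, the marginal ∑_j p x y i j is a rational number, and for every y, j and every x, the marginal ∑_i p x y i j is a rational number. -/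
open scoped BigOperators

/-! Summing over one party's outcomes collapses that party's PVM to the identity, so each marginal
is `(1/d) · tr P` for a projection `P`; the trace of an idempotent matrix is its rank. -/

theorem Matrix.trace_eq_finrank_range_of_isIdempotentElem {K n : Type*} [Field K] [Fintype n]
    [DecidableEq n] {A : Matrix n n K} (hA : IsIdempotentElem A) :
    A.trace = (Module.finrank K (LinearMap.range A.toLin') : K) := by
  rw [← Matrix.trace_toLin'_eq]
  exact LinearMap.IsIdempotentElem.isProj_range _ (hA.map Matrix.toLinAlgEquiv') |>.trace

namespace IsPVM

variable {d m : ℕ} {E : Fin m → Matrix (Fin d) (Fin d) ℂ}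

theorem exists_trace_eq_natCast (hE : IsPVM E) (i : Fin m) : ∃ n : ℕ, (E i).trace = n :=
  ⟨_, Matrix.trace_eq_finrank_range_of_isIdempotentElem (hE.2.1 i)⟩

theorem sum_trace_mul_left (hE : IsPVM E) (A : Matrix (Fin d) (Fin d) ℂ) :
    ∑ i, (A * E i).trace = A.trace := by
  rw [← Matrix.trace_sum, ← Matrix.mul_sum, hE.2.2, Matrix.mul_one]

theorem sum_trace_mul_right (hE : IsPVM E) (A : Matrix (Fin d) (Fin d) ℂ) :
    ∑ i, (E i * A).trace = A.trace := by
  rw [← Matrix.trace_sum, ← Matrix.sum_mul, hE.2.2, Matrix.one_mul]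

end IsPVM

theorem exists_rat_eq_of_ofReal_eq_one_div_natCast_mul {r : ℝ} {n d : ℕ}
    (h : (r : ℂ) = 1 / (d : ℂ) * n) : ∃ q : ℚ, r = q :=
  ⟨n / d, Complex.ofReal_injective (by push_cast; rw [h, one_div_mul_eq_div])⟩

/-- A maximally entangled correlation has rational marginal densities. -/
theorem Cmax_marginals_rational {nA nB m : ℕ}
    (p : Fin nA → Fin nB → Fin m → Fin m → ℝ) (hp : p ∈ Cmax nA nB m) :
    (∀ (x : Fin nA) (i : Fin m) (y : Fin nB), ∃ q : ℚ, (∑ j, p x y i j) = (q : ℝ)) ∧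
    (∀ (y : Fin nB) (j : Fin m) (x : Fin nA), ∃ q : ℚ, (∑ i, p x y i j) = (q : ℝ)) := by
  simp only [Cmax, Set.mem_iUnion] at hp
  obtain ⟨d, -, -, E, F, hE, hF, hpEF⟩ := hp
  constructor
  · intro x i y
    obtain ⟨n, hn⟩ := (hE x).exists_trace_eq_natCast i
    refine exists_rat_eq_of_ofReal_eq_one_div_natCast_mul (d := d) (n := n) ?_
    simp only [Complex.ofReal_sum, hpEF, ← Finset.mul_sum, (hF y).sum_trace_mul_left, hn]
  · intro y j x
    obtain ⟨n, hn⟩ := (hF y).exists_trace_eq_natCast j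
    refine exists_rat_eq_of_ofReal_eq_one_div_natCast_mul (d := d) (n := n) ?_
    simp only [Complex.ofReal_sum, hpEF, ← Finset.mul_sum, (hE x).sum_trace_mul_right, hn]
end

section
/- For all nA, nB ≥ 1 and m ≥ 2, the set C_max(nA,nB,m), regarded as a subset of the real vector space of families Fin nA → Fin nB → Fin m → Fin m → ℝ, is not convex. -/
/-!
Deterministic correlations (Alice and Bob answer by fixed functions of their questions) lie in
`C_max`, already in dimension one. Suppose a mixture `t • δ₀ + (1 - t) • δ₁` of the two constant
deterministic strategies answering `0` and `1` were realised in dimension `d` by PVMs `E`, `F`.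
Since its off-diagonal entries vanish, `tr (E i * F j) = 0` and hence `E i * F j = 0` for
`i ≠ j`; together with `∑ E = ∑ F = 1` this forces `E i = F i`. So
`t = tr (E 0 * F 0) / d = tr (E 0) / d = rank (E 0) / d` is rational, which fails for `t = √2 / 2`.
-/

open scoped BigOperators

open Matrix
open scoped ComplexOrder

theorem Matrix.exists_trace_eq_natCast_of_isIdempotentElem {K n : Type*} [Field K] [CharZero K]
    [Fintype n] [DecidableEq n] {P : Matrix n n K} (hP : IsIdempotentElem P) :
    ∃ r : ℕ, P.trace = r :=
  ⟨_, by rw [← trace_toLin'_eq,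
    (LinearMap.IsIdempotentElem.isProj_range P.toLin' (hP.map toLinAlgEquiv')).trace]⟩

theorem Matrix.mul_eq_zero_of_trace_mul_eq_zero_s3 {R n : Type*} [CommRing R] [PartialOrder R]
    [StarRing R] [StarOrderedRing R] [NoZeroDivisors R] [Fintype n]
    {P Q : Matrix n n R} (hP : P.IsHermitian) (hQ : Q.IsHermitian)
    (hP2 : IsIdempotentElem P) (hQ2 : IsIdempotentElem Q) (h : (P * Q).trace = 0) :
    P * Q = 0 := by
  rw [← trace_conjTranspose_mul_self_eq_zero_iff, conjTranspose_mul, hP.eq, hQ.eq, mul_assoc,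
    ← mul_assoc P, hP2.eq, trace_mul_comm, mul_assoc, hQ2.eq, h]

theorem eq_of_sum_eq_one_of_mul_eq_zero_s3 {R ι : Type*} [Ring R] [Fintype ι] [DecidableEq ι]
    {E F : ι → R} (hE : ∑ i, E i = 1) (hF : ∑ j, F j = 1)
    (h : ∀ i j, i ≠ j → E i * F j = 0) (i : ι) : E i = F i :=
  calc E i = ∑ j, E i * F j := by rw [← Finset.mul_sum, hF, mul_one]
    _ = E i * F i := Finset.sum_eq_single i (fun j _ hj => h i j (Ne.symm hj)) (by simp)
    _ = ∑ j, E j * F i := (Finset.sum_eq_single i (fun j _ hj => h j i hj) (by simp)).symm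
    _ = F i := by rw [← Finset.sum_mul, hE, one_mul]

theorem exists_nat_eq_div_of_mem_CmaxD {nA nB m d : ℕ} {p : Fin nA → Fin nB → Fin m → Fin m → ℝ}
    (hp : p ∈ CmaxD nA nB m d) {x : Fin nA} {y : Fin nB}
    (hxy : ∀ i j, i ≠ j → p x y i j = 0) (i : Fin m) : ∃ r : ℕ, p x y i i = r / d := by
  obtain ⟨-, E, F, hE, hF, hpEF⟩ := hp
  have hEF : ∀ i j, i ≠ j → E x i * F y j = 0 := by
    intro i j hij
    refine mul_eq_zero_of_trace_mul_eq_zero_s3 ((hE x).1 i) ((hF y).1 j) ((hE x).2.1 i)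
      ((hF y).2.1 j) ?_
    have h := hpEF x y i j
    rw [hxy i j hij, Complex.ofReal_zero, eq_comm, mul_eq_zero] at h
    rcases h with hd | htr
    · -- `1 / (0 : ℂ) = 0`, but then the matrices are empty
      obtain rfl : d = 0 := by simpa using hd
      simp [trace]
    · exact htr
  obtain ⟨r, hr⟩ := exists_trace_eq_natCast_of_isIdempotentElem ((hE x).2.1 i)
  refine ⟨r, ?_⟩
  have h := hpEF x y i i
  rw [← eq_of_sum_eq_one_of_mul_eq_zero_s3 (hE x).2.2 (hF y).2.2 hEF i, (hE x).2.1 i, hr] at h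
  exact Complex.ofReal_injective (by rw [h]; push_cast; ring)

theorem not_irrational_of_mem_Cmax {nA nB m : ℕ} {p : Fin nA → Fin nB → Fin m → Fin m → ℝ}
    (hp : p ∈ Cmax nA nB m) {x : Fin nA} {y : Fin nB}
    (hxy : ∀ i j, i ≠ j → p x y i j = 0) (i : Fin m) : ¬ Irrational (p x y i i) := by
  obtain ⟨d, -, hpd⟩ := Set.mem_iUnion₂.1 hp
  obtain ⟨r, hr⟩ := exists_nat_eq_div_of_mem_CmaxD hpd hxy i
  exact fun h => h ⟨r / d, by rw [hr]; push_cast; rfl⟩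

theorem isPVM_pi_single {d m : ℕ} (k : Fin m) :
    IsPVM (Pi.single k (1 : Matrix (Fin d) (Fin d) ℂ)) := by
  refine ⟨fun i => ?_, fun i => ?_, by simp [Finset.sum_pi_single']⟩ <;>
    by_cases h : i = k <;> simp [h, isHermitian_one]

def deterministicCorrelation {nA nB m : ℕ} (a : Fin nA → Fin m) (b : Fin nB → Fin m) :
    Fin nA → Fin nB → Fin m → Fin m → ℝ :=
  fun x y i j => if i = a x ∧ j = b y then 1 else 0

theorem deterministicCorrelation_mem_Cmax {nA nB m : ℕ} (a : Fin nA → Fin m)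
    (b : Fin nB → Fin m) : deterministicCorrelation a b ∈ Cmax nA nB m := by
  refine Set.mem_iUnion₂.2 ⟨1, le_rfl, ⟨fun x y i j => ?_, fun x y => ?_⟩,
    fun x => Pi.single (a x) 1, fun y => Pi.single (b y) 1,
    fun x => isPVM_pi_single _, fun y => isPVM_pi_single _, fun x y i j => ?_⟩
  · unfold deterministicCorrelation; split <;> norm_num
  · simp [deterministicCorrelation, ite_and]
  · by_cases hi : i = a x <;> by_cases hj : j = b y <;>
      simp [deterministicCorrelation, hi, hj]

theorem deterministicCorrelation_apply_of_ne {nA nB m : ℕ} {a : Fin nA → Fin m}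
    {b : Fin nB → Fin m} {x : Fin nA} {y : Fin nB} (hab : a x = b y) {i j : Fin m}
    (hij : i ≠ j) : deterministicCorrelation a b x y i j = 0 :=
  if_neg fun h => hij (h.1.trans (hab.trans h.2.symm))

/-- For `nA, nB ≥ 1` and `m ≥ 2` the set `C_max(nA,nB,m)` is not convex. -/
theorem Cmax_not_convex {nA nB m : ℕ} (hA : 1 ≤ nA) (hB : 1 ≤ nB) (hm : 2 ≤ m) :
    ¬ Convex ℝ (Cmax nA nB m) := by
  intro hconv
  let k₀ : Fin m := ⟨0, by omega⟩
  let k₁ : Fin m := ⟨1, by omega⟩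
  have hk : k₀ ≠ k₁ := by simp [k₀, k₁, Fin.ext_iff]
  have ht : Irrational (√2 / 2) := irrational_sqrt_two.div_natCast two_ne_zero
  have ht0 : 0 ≤ √2 / 2 := by positivity
  have ht1 : 0 ≤ 1 - √2 / 2 := by
    have : √2 ≤ 2 := Real.sqrt_le_iff.2 ⟨zero_le_two, by norm_num⟩
    linarith
  have hmix := hconv
    (deterministicCorrelation_mem_Cmax (fun _ : Fin nA => k₀) (fun _ : Fin nB => k₀))
    (deterministicCorrelation_mem_Cmax (fun _ => k₁) (fun _ => k₁)) ht0 ht1 (add_sub_cancel _ 1)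
  refine not_irrational_of_mem_Cmax hmix (x := ⟨0, hA⟩) (y := ⟨0, hB⟩) (fun i j hij => ?_) k₀ ?_
  · simp [deterministicCorrelation_apply_of_ne, hij]
  · simpa [deterministicCorrelation, hk] using ht
end

section
/- The convex hull of C_max(nA,nB,m) is contained in the closure of C_max(nA,nB,m) (so C_max is dense in its own convex hull); likewise, the convex hull of C_max^s(n,m) is contained in the closure of C_max^s(n,m). -/
open scoped BigOperators

/-!
If `p` is realized by PVMs on `ℂ^d₁` and `q` on `ℂ^d₂`, the direct sum of `a * d₂` copies of the
first realization and `b * d₁` copies of the second lives on `ℂ^((a + b) d₁ d₂)`, and its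
normalized trace is `(a p + b q) / (a + b)`. So `C_max` and `C_max^s` are closed under convex
combinations with rational weights; as `ℚ` is dense in `ℝ`, their closures are convex and hence
contain their convex hulls.
-/

open Matrix

theorem Matrix.trace_submatrix_equiv {ι κ R : Type*} [Fintype ι] [Fintype κ] [AddCommMonoid R]
    (A : Matrix ι ι R) (e : κ ≃ ι) : (A.submatrix e e).trace = A.trace :=
  e.sum_comp fun i => A i i

theorem Matrix.trace_fromBlocks {ι κ R : Type*} [Fintype ι] [Fintype κ] [AddCommMonoid R]
    (A : Matrix ι ι R) (B : Matrix ι κ R) (C : Matrix κ ι R) (D : Matrix κ κ R) :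
    (fromBlocks A B C D).trace = A.trace + D.trace :=
  Fintype.sum_sum_type _

section PVM

variable {ι κ : Type*} [Fintype ι] [DecidableEq ι] [Fintype κ] [DecidableEq κ] {m : ℕ}

def IsPVMOn (E : Fin m → Matrix ι ι ℂ) : Prop :=
  (∀ i, (E i).IsHermitian) ∧ (∀ i, E i * E i = E i) ∧ ∑ i, E i = 1

theorem IsPVMOn.blockDiagonal {E : Fin m → Matrix ι ι ℂ} (hE : IsPVMOn E)
    (o : Type*) [Fintype o] [DecidableEq o] :
    IsPVMOn fun i => blockDiagonal fun _ : o => E i := by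
  obtain ⟨hherm, hidem, hsum⟩ := hE
  refine ⟨fun i => ?_, fun i => by rw [← blockDiagonal_mul, hidem], ?_⟩
  · rw [IsHermitian, blockDiagonal_conjTranspose, (hherm i).eq]
  · have := map_sum (blockDiagonalAddMonoidHom ι ι o ℂ) (fun i _ => E i) Finset.univ
    simp only [blockDiagonalAddMonoidHom_apply, Finset.sum_fn, hsum] at this
    exact this.symm.trans blockDiagonal_one

theorem IsPVMOn.fromBlocks {E : Fin m → Matrix ι ι ℂ} {F : Fin m → Matrix κ κ ℂ}
    (hE : IsPVMOn E) (hF : IsPVMOn F) : IsPVMOn fun i => fromBlocks (E i) 0 0 (F i) := by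
  obtain ⟨hEherm, hEidem, hEsum⟩ := hE
  obtain ⟨hFherm, hFidem, hFsum⟩ := hF
  refine ⟨fun i => ?_, fun i => ?_, ?_⟩
  · simp [IsHermitian, fromBlocks_conjTranspose, (hEherm i).eq, (hFherm i).eq]
  · simp [fromBlocks_multiply, hEidem i, hFidem i]
  · rw [← fromBlocks_one, ← hEsum, ← hFsum]
    ext (a | a) (b | b) <;> simp [Matrix.sum_apply]

theorem IsPVMOn.submatrix {E : Fin m → Matrix ι ι ℂ} (hE : IsPVMOn E) (e : κ ≃ ι) :
    IsPVMOn fun i => (E i).submatrix e e := by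
  obtain ⟨hherm, hidem, hsum⟩ := hE
  refine ⟨fun i => (hherm i).submatrix e, fun i => by rw [submatrix_mul_equiv, hidem], ?_⟩
  rw [← submatrix_one_equiv e, ← hsum]
  ext a b
  simp [Matrix.sum_apply]

end PVM

section Realization

variable {ι κ : Type*} [Fintype ι] [DecidableEq ι] [Fintype κ] [DecidableEq κ] {nA nB m : ℕ}
  {p q : Fin nA → Fin nB → Fin m → Fin m → ℝ}

variable (ι) in
/-- `p x y i j = Tr (E x i * F y j) / |ι|`, multiplied out by `|ι|`. -/
def IsMaxEntRealizableOn (p : Fin nA → Fin nB → Fin m → Fin m → ℝ) : Prop :=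
  ∃ (E : Fin nA → Fin m → Matrix ι ι ℂ) (F : Fin nB → Fin m → Matrix ι ι ℂ),
    (∀ x, IsPVMOn (E x)) ∧ (∀ y, IsPVMOn (F y)) ∧
    ∀ x y i j, (Fintype.card ι : ℂ) * p x y i j = (E x i * F y j).trace

theorem IsMaxEntRealizableOn.prod (hp : IsMaxEntRealizableOn ι p)
    (o : Type*) [Fintype o] [DecidableEq o] : IsMaxEntRealizableOn (ι × o) p := by
  obtain ⟨E, F, hE, hF, hEF⟩ := hp
  refine ⟨fun x i => blockDiagonal fun _ : o => E x i, fun y j => blockDiagonal fun _ : o => F y j,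
    fun x => (hE x).blockDiagonal o, fun y => (hF y).blockDiagonal o, fun x y i j => ?_⟩
  rw [← blockDiagonal_mul, trace_blockDiagonal, ← hEF x y i j]
  simp only [Fintype.card_prod, Nat.cast_mul, Finset.sum_const, Finset.card_univ, nsmul_eq_mul]
  ring

theorem IsMaxEntRealizableOn.sum (hp : IsMaxEntRealizableOn ι p)
    (hq : IsMaxEntRealizableOn κ q) :
    IsMaxEntRealizableOn (ι ⊕ κ)
      ((Fintype.card ι / (Fintype.card ι + Fintype.card κ) : ℝ) • p +
        (Fintype.card κ / (Fintype.card ι + Fintype.card κ) : ℝ) • q) := by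
  obtain ⟨E, F, hE, hF, hEF⟩ := hp
  obtain ⟨G, H, hG, hH, hGH⟩ := hq
  refine ⟨fun x i => fromBlocks (E x i) 0 0 (G x i), fun y j => fromBlocks (F y j) 0 0 (H y j),
    fun x => (hE x).fromBlocks (hG x), fun y => (hF y).fromBlocks (hH y), fun x y i j => ?_⟩
  simp only [fromBlocks_multiply, Matrix.mul_zero, Matrix.zero_mul, add_zero, zero_add,
    trace_fromBlocks, ← hEF, ← hGH, Fintype.card_sum, Pi.add_apply, Pi.smul_apply, smul_eq_mul]
  have hw : ∀ a b : ℕ, ((a + b : ℕ) : ℝ) * (a / (a + b) * p x y i j + b / (a + b) * q x y i j)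
      = a * p x y i j + b * q x y i j := by
    intro a b
    rcases (a + b).eq_zero_or_pos with h | h
    · obtain ⟨rfl, rfl⟩ : a = 0 ∧ b = 0 := by omega
      simp
    · have : (a + b : ℝ) ≠ 0 := by exact_mod_cast h.ne'
      push_cast
      field_simp
  exact_mod_cast congrArg ((↑) : ℝ → ℂ) (hw _ _)

theorem IsMaxEntRealizableOn.congr (hp : IsMaxEntRealizableOn ι p) (e : κ ≃ ι) :
    IsMaxEntRealizableOn κ p := by
  obtain ⟨E, F, hE, hF, hEF⟩ := hp
  refine ⟨fun x i => (E x i).submatrix e e, fun y j => (F y j).submatrix e e,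
    fun x => (hE x).submatrix e, fun y => (hF y).submatrix e, fun x y i j => ?_⟩
  rw [submatrix_mul_equiv, trace_submatrix_equiv, ← hEF, Fintype.card_congr e]

theorem mem_CmaxD_iff {d : ℕ} (hd : d ≠ 0) :
    p ∈ CmaxD nA nB m d ↔ IsCorrelation p ∧ IsMaxEntRealizableOn (Fin d) p := by
  have hdC : (d : ℂ) ≠ 0 := Nat.cast_ne_zero.mpr hd
  simp only [CmaxD, IsMaxEntRealizableOn, IsPVM, IsPVMOn, Fintype.card_fin, one_div,
    eq_inv_mul_iff_mul_eq₀ hdC, Set.mem_ofPred_eq]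

end Realization

theorem convex_setOf_isCorrelation {nA nB m : ℕ} :
    Convex ℝ {p : Fin nA → Fin nB → Fin m → Fin m → ℝ | IsCorrelation p} := by
  rintro p ⟨hp_nonneg, hp_sum⟩ q ⟨hq_nonneg, hq_sum⟩ a b ha hb hab
  refine ⟨fun x y i j => ?_, fun x y => ?_⟩
  · exact add_nonneg (mul_nonneg ha (hp_nonneg x y i j)) (mul_nonneg hb (hq_nonneg x y i j))
  · simp only [Pi.add_apply, Pi.smul_apply, smul_eq_mul, Finset.sum_add_distrib, ← Finset.mul_sum,
      hp_sum, hq_sum, mul_one, hab]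

theorem Synchronous.smul_add_smul {n m : ℕ} {p q : Fin n → Fin n → Fin m → Fin m → ℝ}
    (hp : Synchronous p) (hq : Synchronous q) (a b : ℝ) : Synchronous (a • p + b • q) := by
  intro x i j hij
  simp [hp x i j hij, hq x i j hij]

theorem natCast_div_smul_add_mem_Cmax {nA nB m : ℕ} {p q : Fin nA → Fin nB → Fin m → Fin m → ℝ}
    (hp : p ∈ Cmax nA nB m) (hq : q ∈ Cmax nA nB m) {a b : ℕ} (hab : a + b ≠ 0) :
    (a / (a + b) : ℝ) • p + (b / (a + b) : ℝ) • q ∈ Cmax nA nB m := by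
  simp only [Cmax, Set.mem_iUnion] at hp hq ⊢
  obtain ⟨d₁, hd₁, hp⟩ := hp
  obtain ⟨d₂, hd₂, hq⟩ := hq
  rw [mem_CmaxD_iff (by omega)] at hp hq
  -- the two blocks have sizes `a * (d₁ * d₂)` and `b * (d₁ * d₂)`, in the ratio `a : b`
  have hr := (hp.2.prod (Fin (a * d₂))).sum (hq.2.prod (Fin (b * d₁)))
  have hcard₁ : d₁ * (a * d₂) = a * (d₁ * d₂) := by ring
  have hcard₂ : d₂ * (b * d₁) = b * (d₁ * d₂) := by ring
  have hweight : ∀ c : ℕ, ((c * (d₁ * d₂) : ℕ) : ℝ) / ((a * (d₁ * d₂) : ℕ) + (b * (d₁ * d₂) : ℕ))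
      = c / (a + b) := by
    intro c
    have : (d₁ * d₂ : ℝ) ≠ 0 := by positivity
    push_cast
    rw [← add_mul, mul_div_mul_right _ _ this]
  simp only [Fintype.card_prod, Fintype.card_fin, hcard₁, hcard₂, hweight] at hr
  have hdim : Fintype.card (Fin d₁ × Fin (a * d₂) ⊕ Fin d₂ × Fin (b * d₁)) ≠ 0 := by
    simp only [Fintype.card_sum, Fintype.card_prod, Fintype.card_fin, hcard₁, hcard₂, ← add_mul]
    exact mul_ne_zero hab (by positivity)
  have hsum : (a / (a + b) + b / (a + b) : ℝ) = 1 := by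
    rw [← add_div, div_self (by exact_mod_cast hab)]
  exact ⟨_, Nat.one_le_iff_ne_zero.2 hdim, (mem_CmaxD_iff hdim).2
    ⟨convex_setOf_isCorrelation hp.1 hq.1 (by positivity) (by positivity) hsum,
      hr.congr (Fintype.equivFin _).symm⟩⟩

theorem Rat.exists_natCast_div_add_eq {t : ℚ} (h0 : 0 ≤ t) (h1 : t ≤ 1) :
    ∃ a b : ℕ, a + b ≠ 0 ∧ (a / (a + b) : ℝ) = 1 - t ∧ (b / (a + b) : ℝ) = t := by
  have hnum : ((t.num.toNat : ℕ) : ℤ) = t.num := Int.toNat_of_nonneg (Rat.num_nonneg.2 h0)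
  have hle : t.num.toNat ≤ t.den := by have := Rat.num_le_denom_iff.2 h1; omega
  have hden : (t.den : ℝ) ≠ 0 := by positivity
  have ht : (t : ℝ) = t.num.toNat / t.den := by
    have : (t.num : ℝ) = t.num.toNat := by exact_mod_cast hnum.symm
    rw [Rat.cast_def, this]
  have hsum : ((t.den - t.num.toNat : ℕ) + t.num.toNat : ℝ) = t.den := by
    rw [← Nat.cast_add, Nat.sub_add_cancel hle]
  refine ⟨t.den - t.num.toNat, t.num.toNat, by have := t.den_pos; omega, ?_, ?_⟩
  · rw [hsum, ht, Nat.cast_sub hle]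
    field_simp
  · rw [hsum, ht]

theorem convex_closure_of_natCast_div_smul_add_mem {V : Type*} [AddCommGroup V] [Module ℝ V]
    [TopologicalSpace V] [ContinuousAdd V] [ContinuousSMul ℝ V] {S : Set V}
    (hS : ∀ p ∈ S, ∀ q ∈ S, ∀ a b : ℕ, a + b ≠ 0 →
      (a / (a + b) : ℝ) • p + (b / (a + b) : ℝ) • q ∈ S) :
    Convex ℝ (closure S) := by
  have hseg : ∀ p ∈ S, ∀ q ∈ S, segment ℝ p q ⊆ closure S := by
    intro p hp q hq
    have hclosed : IsClosed ((fun θ : ℝ => (1 - θ) • p + θ • q) ⁻¹' closure S) :=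
      isClosed_closure.preimage (by fun_prop)
    have hrat : Set.Ioo (0 : ℝ) 1 ∩ Set.range ((↑) : ℚ → ℝ) ⊆
        (fun θ : ℝ => (1 - θ) • p + θ • q) ⁻¹' closure S := by
      rintro _ ⟨⟨h0, h1⟩, t, rfl⟩
      obtain ⟨a, b, hab, ha, hb⟩ :=
        Rat.exists_natCast_div_add_eq (t := t) (by exact_mod_cast h0.le) (by exact_mod_cast h1.le)
      have := hS p hp q hq a b hab
      rw [ha, hb] at this
      exact subset_closure this
    rw [segment_eq_image, Set.image_subset_iff, ← closure_Ioo zero_ne_one]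
    exact closure_minimal ((Rat.denseRange_cast.open_subset_closure_inter isOpen_Ioo).trans
      (closure_minimal hrat hclosed)) hclosed
  intro x hx y hy s t hs ht hst
  have hcombo : ∀ p ∈ S, ∀ q ∈ S, s • p + t • q ∈ closure S :=
    fun p hp q hq => hseg p hp q hq ⟨s, t, hs, ht, hst, rfl⟩
  simpa only [closure_closure] using
    map_mem_closure₂ (f := fun p q : V => s • p + t • q) (by fun_prop) hx hy hcombo

/-- STATEMENT 5: `C_max` is dense in its own convex hull, and likewise for `C_max^s`. -/
theorem convexHull_Cmax_subset_closure (nA nB m n m' : ℕ) :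
    convexHull ℝ (Cmax nA nB m) ⊆ closure (Cmax nA nB m) ∧
    convexHull ℝ (CmaxSync n m') ⊆ closure (CmaxSync n m') := by
  have hCmax : Convex ℝ (closure (Cmax nA nB m)) :=
    convex_closure_of_natCast_div_smul_add_mem fun p hp q hq a b hab =>
      natCast_div_smul_add_mem_Cmax hp hq hab
  have hCmaxSync : Convex ℝ (closure (CmaxSync n m')) :=
    convex_closure_of_natCast_div_smul_add_mem fun p hp q hq a b hab =>
      ⟨natCast_div_smul_add_mem_Cmax hp.1 hq.1 hab, hp.2.smul_add_smul hq.2 _ _⟩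
  exact ⟨convexHull_min subset_closure hCmax, convexHull_min subset_closure hCmaxSync⟩
end

section
/- For every d, n, m ≥ 1, the convex hull (over ℝ) of C_{max,d}^s(n,m) is a closed subset of the space of families Fin n → Fin n → Fin m → Fin m → ℝ with the topology of coordinatewise convergence. -/
/-!
Hermitian idempotent matrices have entries of modulus at most `1`, so PVMs form a compact set and
`C_{max,d}` is the continuous image `(E, F) ↦ (1/d) Tr(E x i * F y j)` of a compact set, cut down
by the closed correlation conditions; the synchronous part is then compact as well. By
Carathéodory's theorem the convex hull of a compact set `K` in a finite-dimensional space is the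
finite union, over `k ≤ dim + 1`, of the continuous images of `stdSimplex × K^k`, hence compact and
in particular closed.
-/

open scoped BigOperators

open Set

namespace Matrix

variable {n : Type*} [Fintype n]

theorem IsHermitian.star_trace_mul {α : Type*} [CommSemiring α] [StarRing α]
    {A B : Matrix n n α} (hA : A.IsHermitian) (hB : B.IsHermitian) :
    star (A * B).trace = (A * B).trace := by
  rw [← trace_conjTranspose, conjTranspose_mul, hA.eq, hB.eq, trace_mul_comm]

theorem IsHermitian.norm_apply_le_one_of_mul_self {E : Matrix n n ℂ} (hH : E.IsHermitian)
    (hI : E * E = E) (a b : n) : ‖E a b‖ ≤ 1 := by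
  set t : ℝ := ∑ k, Complex.normSq (E a k)
  have hrow : ∀ k, Complex.normSq (E a k) ≤ t := fun k =>
    Finset.single_le_sum (f := fun k => Complex.normSq (E a k))
      (fun k _ => Complex.normSq_nonneg _) (Finset.mem_univ k)
  -- `E = E * Eᴴ` makes the diagonal entry `E a a` the squared norm `t` of the `a`-th row.
  have hdiag : E a a = t := by
    conv_lhs => rw [← hI, ← congrArg (E * ·) hH.eq]
    simp [t, mul_apply, Complex.mul_conj]
  have ht : t * t ≤ t := by simpa [hdiag] using hrow a
  have hab : ‖E a b‖ ^ 2 ≤ t := by simpa [Complex.sq_norm] using hrow b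
  have ht1 : t ≤ 1 := by nlinarith [hrow a, Complex.normSq_nonneg (E a a)]
  exact (sq_le_one_iff₀ (norm_nonneg _)).1 (hab.trans ht1)

theorem isCompact_setOf_isHermitian_mul_self :
    IsCompact {E : Matrix n n ℂ | E.IsHermitian ∧ E * E = E} := by
  have hclosed : IsClosed {E : Matrix n n ℂ | E.IsHermitian ∧ E * E = E} :=
    (isClosed_eq (by fun_prop) continuous_id).inter (isClosed_eq (by fun_prop) continuous_id)
  refine (isCompact_univ_pi fun _ => isCompact_univ_pi fun _ =>
    isCompact_closedBall (0 : ℂ) 1).of_isClosed_subset hclosed ?_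
  rintro E ⟨hH, hI⟩ a - b -
  simpa using hH.norm_apply_le_one_of_mul_self hI a b

end Matrix

section ConvexHull

variable {E : Type*} [AddCommGroup E] [Module ℝ E]

def convexCombinations (s : Set E) (k : ℕ) : Set E :=
  (fun wz : (Fin k → ℝ) × (Fin k → E) => ∑ i, wz.1 i • wz.2 i) ''
    (stdSimplex ℝ (Fin k) ×ˢ univ.pi fun _ => s)

theorem IsCompact.convexCombinations [TopologicalSpace E] [ContinuousAdd E]
    [ContinuousSMul ℝ E] {s : Set E} (hs : IsCompact s) (k : ℕ) :
    IsCompact (convexCombinations s k) :=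
  ((isCompact_stdSimplex ℝ (Fin k)).prod (isCompact_univ_pi fun _ => hs)).image (by fun_prop)

theorem convexCombinations_subset_convexHull (s : Set E) (k : ℕ) :
    convexCombinations s k ⊆ convexHull ℝ s := by
  rintro _ ⟨⟨w, z⟩, ⟨hw, hz⟩, rfl⟩
  exact (convex_convexHull ℝ s).sum_mem (fun i _ => hw.1 i) hw.2
    fun i _ => subset_convexHull ℝ s (hz i (mem_univ i))

theorem convexHull_subset_iUnion_convexCombinations [FiniteDimensional ℝ E] (s : Set E) :
    convexHull ℝ s ⊆ ⋃ k ≤ Module.finrank ℝ E + 1, convexCombinations s k := by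
  intro x hx
  obtain ⟨ι, _, z, w, hzs, hz, hw, hw1, rfl⟩ := eq_pos_convex_span_of_mem_convexHull hx
  have hcard : Fintype.card ι ≤ Module.finrank ℝ E + 1 :=
    hz.card_le_finrank_succ.trans (Nat.add_le_add_right (Submodule.finrank_le _) 1)
  let e := Fintype.equivFin ι
  refine mem_biUnion (x := Fintype.card ι) hcard
    ⟨(w ∘ e.symm, z ∘ e.symm), ⟨⟨fun i => (hw _).le, ?_⟩, fun i _ => hzs (mem_range_self _)⟩, ?_⟩
  · simpa [e.symm.sum_comp w] using hw1
  · exact e.symm.sum_comp fun i => w i • z i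

theorem IsCompact.convexHull [TopologicalSpace E] [ContinuousAdd E] [ContinuousSMul ℝ E]
    [FiniteDimensional ℝ E] {s : Set E} (hs : IsCompact s) : IsCompact (convexHull ℝ s) := by
  rw [(convexHull_subset_iUnion_convexCombinations s).antisymm
    (iUnion₂_subset fun k _ => convexCombinations_subset_convexHull s k)]
  exact (finite_Iic _).isCompact_biUnion fun k _ => hs.convexCombinations k

end ConvexHull

theorem isCompact_setOf_isPVM (d m : ℕ) :
    IsCompact {E : Fin m → Matrix (Fin d) (Fin d) ℂ | IsPVM E} := by
  have hpvm : {E : Fin m → Matrix (Fin d) (Fin d) ℂ | IsPVM E} =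
      (univ.pi fun _ => {P | P.IsHermitian ∧ P * P = P}) ∩ {E | ∑ i, E i = 1} := by
    ext E
    simp [IsPVM, forall_and, and_assoc]
  rw [hpvm]
  exact (isCompact_univ_pi fun _ => Matrix.isCompact_setOf_isHermitian_mul_self).inter_right
    (isClosed_eq (by fun_prop) continuous_const)

theorem isClosed_setOf_isCorrelation (nA nB m : ℕ) :
    IsClosed {p : Fin nA → Fin nB → Fin m → Fin m → ℝ | IsCorrelation p} := by
  simp only [IsCorrelation, ofPred_and, ofPred_forall]
  exact (isClosed_iInter fun x => isClosed_iInter fun y => isClosed_iInter fun i =>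
      isClosed_iInter fun j => isClosed_le continuous_const (by fun_prop)).inter
    (isClosed_iInter fun x => isClosed_iInter fun y => isClosed_eq (by fun_prop) continuous_const)

theorem isClosed_setOf_synchronous (n m : ℕ) :
    IsClosed {p : Fin n → Fin n → Fin m → Fin m → ℝ | Synchronous p} := by
  simp only [Synchronous, ofPred_forall]
  exact isClosed_iInter fun x => isClosed_iInter fun i => isClosed_iInter fun j =>
    isClosed_iInter fun _ => isClosed_eq (by fun_prop) continuous_const

section TraceCorrelation

variable {nA nB m d : ℕ}

noncomputable def traceCorrelation
    (EF : (Fin nA → Fin m → Matrix (Fin d) (Fin d) ℂ) ×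
      (Fin nB → Fin m → Matrix (Fin d) (Fin d) ℂ)) :
    Fin nA → Fin nB → Fin m → Fin m → ℝ :=
  fun x y i j => ((1 / (d : ℂ)) * (EF.1 x i * EF.2 y j).trace).re

theorem continuous_traceCorrelation :
    Continuous (traceCorrelation (nA := nA) (nB := nB) (m := m) (d := d)) := by
  unfold traceCorrelation
  fun_prop

theorem ofReal_traceCorrelation {E : Fin nA → Fin m → Matrix (Fin d) (Fin d) ℂ}
    {F : Fin nB → Fin m → Matrix (Fin d) (Fin d) ℂ} (hE : ∀ x i, (E x i).IsHermitian)
    (hF : ∀ y j, (F y j).IsHermitian) (x : Fin nA) (y : Fin nB) (i j : Fin m) :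
    (traceCorrelation (E, F) x y i j : ℂ) = (1 / (d : ℂ)) * (E x i * F y j).trace := by
  refine Complex.conj_eq_iff_re.mp ?_
  rw [map_mul, ← Complex.star_def, (hE x i).star_trace_mul (hF y j)]
  simp

theorem CmaxD_eq_inter_image :
    CmaxD nA nB m d = {p | IsCorrelation p} ∩
      traceCorrelation (d := d) '' ({E | ∀ x, IsPVM (E x)} ×ˢ {F | ∀ y, IsPVM (F y)}) := by
  ext p
  constructor
  · rintro ⟨hp, E, F, hE, hF, hEF⟩
    refine ⟨hp, (E, F), ⟨hE, hF⟩, ?_⟩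
    ext x y i j
    rw [traceCorrelation, ← hEF x y i j, Complex.ofReal_re]
  · rintro ⟨hp, ⟨E, F⟩, ⟨hE, hF⟩, rfl⟩
    exact ⟨hp, E, F, hE, hF, ofReal_traceCorrelation (fun x => (hE x).1) (fun y => (hF y).1)⟩

end TraceCorrelation

theorem isCompact_CmaxD (nA nB m d : ℕ) : IsCompact (CmaxD nA nB m d) := by
  rw [CmaxD_eq_inter_image]
  have hpvm {k : ℕ} :
      IsCompact {E : Fin k → Fin m → Matrix (Fin d) (Fin d) ℂ | ∀ x, IsPVM (E x)} := by
    simpa [Set.pi] using isCompact_univ_pi fun (_ : Fin k) => isCompact_setOf_isPVM d m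
  exact ((hpvm.prod hpvm).image continuous_traceCorrelation).inter_left
    (isClosed_setOf_isCorrelation nA nB m)

theorem isClosed_convexHull_CmaxD_sync_general (d n m : ℕ) :
    IsClosed (convexHull ℝ {p : Fin n → Fin n → Fin m → Fin m → ℝ |
      p ∈ CmaxD n n m d ∧ Synchronous p}) :=
  ((isCompact_CmaxD n n m d).inter_right (isClosed_setOf_synchronous n m)).convexHull.isClosed

/-- STATEMENT 8: the convex hull of `C_{max,d}^s(n,m)` is closed. -/
theorem isClosed_convexHull_CmaxD_sync (d n m : ℕ) (hd : 1 ≤ d) (hn : 1 ≤ n) (hm : 1 ≤ m) :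
    IsClosed (convexHull ℝ {p : Fin n → Fin n → Fin m → Fin m → ℝ |
      p ∈ CmaxD n n m d ∧ Synchronous p}) :=
  isClosed_convexHull_CmaxD_sync_general d n m
end

section
/- The union over k ≥ 1 of the convex hulls of C_{max,k!}^s(n,m) equals the convex hull of C_max^s(n,m), i.e. ⋃_{k ≥ 1} convexHull ℝ (C_{max,k!}^s(n,m)) = convexHull ℝ (C_max^s(n,m)). -/
open scoped BigOperators

/-!
Tensoring the projections of a maximally entangled strategy on `ℂ^d` with the identity of `ℂ^t`
gives one on `ℂ^(dt)`; the trace picks up a factor `t`, which the normalisation `1/(dt)` cancels.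
Hence `C_{max,d} ⊆ C_{max,d'}` whenever `d ∣ d'`, and since every `d ≥ 1` divides `d!`, the sets
`C^s_{max,k!}` form an increasing family whose union is `C^s_max`. The convex hull of a directed
union is the union of the convex hulls.
-/

open Matrix Set
open scoped Kronecker Nat

theorem convexHull_iUnion_of_directed {𝕜 E ι : Type*} [Field 𝕜] [LinearOrder 𝕜]
    [IsStrictOrderedRing 𝕜] [AddCommGroup E] [Module 𝕜 E] {s : ι → Set E}
    (hs : Directed (· ⊆ ·) s) :
    convexHull 𝕜 (⋃ i, s i) = ⋃ i, convexHull 𝕜 (s i) := by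
  refine subset_antisymm (convexHull_min (iUnion_mono fun i => subset_convexHull 𝕜 (s i)) ?_)
    (iUnion_subset fun i => convexHull_mono (subset_iUnion s i))
  exact (hs.mono_comp (· ⊆ ·) fun _ _ => convexHull_mono).convex_iUnion fun _ =>
    convex_convexHull 𝕜 _

theorem Matrix.trace_reindex {R α β : Type*} [AddCommMonoid R] [Fintype α] [Fintype β]
    (e : α ≃ β) (A : Matrix α α R) : (reindex e e A).trace = A.trace :=
  e.symm.sum_comp fun i => A i i

section Ampliation

variable {d m t : ℕ}

theorem IsPVM.reindex_kronecker_one {E : Fin m → Matrix (Fin d) (Fin d) ℂ} (hE : IsPVM E) :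
    IsPVM fun i => reindexAlgEquiv ℂ ℂ finProdFinEquiv (E i ⊗ₖ (1 : Matrix (Fin t) (Fin t) ℂ)) := by
  obtain ⟨herm, idem, sum⟩ := hE
  refine ⟨fun i => ?_, fun i => ?_, ?_⟩
  · rw [IsHermitian, coe_reindexAlgEquiv, conjTranspose_reindex, conjTranspose_kronecker,
      conjTranspose_one, herm i]
  · rw [← map_mul, ← mul_kronecker_mul, idem i, one_mul]
  · have sum_kronecker : ∑ i, E i ⊗ₖ (1 : Matrix (Fin t) (Fin t) ℂ) = (∑ i, E i) ⊗ₖ 1 := by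
      ext ⟨a, b⟩ ⟨c, e⟩
      simp [Matrix.sum_apply, Finset.sum_mul]
    rw [← map_sum, sum_kronecker, sum, one_kronecker_one, map_one]

end Ampliation

theorem CmaxD_subset_CmaxD_mul (nA nB m d : ℕ) {t : ℕ} (ht : t ≠ 0) :
    CmaxD nA nB m d ⊆ CmaxD nA nB m (d * t) := by
  rintro p ⟨hp, E, F, hE, hF, htr⟩
  refine ⟨hp, _, _, fun x => (hE x).reindex_kronecker_one (t := t),
    fun y => (hF y).reindex_kronecker_one (t := t), fun x y i j => ?_⟩
  have trace_ampliation : (reindexAlgEquiv ℂ ℂ finProdFinEquiv (E x i ⊗ₖ 1) *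
      reindexAlgEquiv ℂ ℂ finProdFinEquiv (F y j ⊗ₖ (1 : Matrix (Fin t) (Fin t) ℂ))).trace =
      (E x i * F y j).trace * t := by
    rw [← map_mul, ← mul_kronecker_mul, one_mul, coe_reindexAlgEquiv, trace_reindex,
      trace_kronecker, trace_one, Fintype.card_fin]
  have ht' : (t : ℂ) ≠ 0 := Nat.cast_ne_zero.mpr ht
  rw [trace_ampliation, htr x y i j, Nat.cast_mul]
  field_simp

theorem CmaxD_subset_CmaxD_of_dvd (nA nB m : ℕ) {d d' : ℕ} (hdvd : d ∣ d') (hd' : d' ≠ 0) :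
    CmaxD nA nB m d ⊆ CmaxD nA nB m d' := by
  obtain ⟨t, rfl⟩ := hdvd
  exact CmaxD_subset_CmaxD_mul nA nB m d (right_ne_zero_of_mul hd')

theorem monotone_CmaxD_factorial (nA nB m : ℕ) : Monotone fun k => CmaxD nA nB m k ! :=
  fun _ _ hkl =>
    CmaxD_subset_CmaxD_of_dvd nA nB m (Nat.factorial_dvd_factorial hkl) (Nat.factorial_ne_zero _)

theorem Cmax_eq_iUnion_CmaxD_factorial_succ (nA nB m : ℕ) :
    Cmax nA nB m = ⋃ k, CmaxD nA nB m (k + 1)! := by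
  refine subset_antisymm (iUnion₂_subset fun d hd => ?_)
    (iUnion_subset fun k => subset_iUnion₂_of_subset (k + 1)! (Nat.factorial_pos _) subset_rfl)
  obtain ⟨k, rfl⟩ := Nat.exists_eq_add_of_le' hd
  exact (CmaxD_subset_CmaxD_of_dvd nA nB m (Nat.dvd_factorial k.succ_pos le_rfl)
    (Nat.factorial_ne_zero _)).trans (subset_iUnion (fun k => CmaxD nA nB m (k + 1)!) k)

theorem CmaxSync_eq_iUnion_factorial_succ (n m : ℕ) :
    CmaxSync n m = ⋃ k, {p | p ∈ CmaxD n n m (k + 1)! ∧ Synchronous p} := by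
  ext p
  simp [CmaxSync, Cmax_eq_iUnion_CmaxD_factorial_succ]

/-- STATEMENT 10: the union over `k ≥ 1` of the convex hulls of `C_{max,k!}^s(n,m)`
equals the convex hull of `C_max^s(n,m)`. -/
theorem iUnion_convexHull_CmaxD_factorial_sync (n m : ℕ) :
    (⋃ (k : ℕ) (_ : 1 ≤ k),
        convexHull ℝ {p : Fin n → Fin n → Fin m → Fin m → ℝ |
          p ∈ CmaxD n n m (Nat.factorial k) ∧ Synchronous p}) =
      convexHull ℝ (CmaxSync n m) := by
  set S : ℕ → Set (Fin n → Fin n → Fin m → Fin m → ℝ) :=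
    fun k => {p | p ∈ CmaxD n n m k ! ∧ Synchronous p}
  have hmono : Monotone fun k => S (k + 1) := fun _ _ hkl _ hp =>
    ⟨monotone_CmaxD_factorial n n m (Nat.succ_le_succ hkl) hp.1, hp.2⟩
  calc ⋃ (k : ℕ) (_ : 1 ≤ k), convexHull ℝ (S k)
      = ⋃ k, convexHull ℝ (S (k + 1)) := iUnion_ge_eq_iUnion_nat_add (fun k => convexHull ℝ (S k)) 1
    _ = convexHull ℝ (⋃ k, S (k + 1)) := (convexHull_iUnion_of_directed hmono.directed_le).symm
    _ = convexHull ℝ (CmaxSync n m) := by rw [CmaxSync_eq_iUnion_factorial_succ]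
end

section
/- For all nA, nB, d, m ≥ 1, the image of C_{max,d}^s(nA+nB, m) under the corner map π equals C_{max,d}(nA,nB,m): π(C_{max,d}^s(nA+nB,m)) = C_{max,d}(nA,nB,m). -/
open scoped BigOperators

/-- The corner of a correlation on `nA + nB` questions per player:
`corner p x y i j = p x (nA + y) i j`. -/
def corner {nA nB m : ℕ} (p : Fin (nA + nB) → Fin (nA + nB) → Fin m → Fin m → ℝ) :
    Fin nA → Fin nB → Fin m → Fin m → ℝ :=
  fun x y i j => p (Fin.castAdd nB x) (Fin.natAdd nA y) i j

open Matrix in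
lemma trace_proj_proj {d : ℕ} (P Q : Matrix (Fin d) (Fin d) ℂ)
    (hP : P.IsHermitian) (hP2 : P*P = P) (hQ : Q.IsHermitian) (hQ2 : Q*Q = Q) :
    ∃ r : ℝ, 0 ≤ r ∧ (P*Q).trace = (r : ℂ) := by
  set A := Q * P with hA
  have hAH : Aᴴ = P * Q := by rw [hA, conjTranspose_mul, hP.eq, hQ.eq]
  have key : (P*Q).trace = (Aᴴ*A).trace := by
    rw [hAH, hA]
    have h1 : (P*Q)*(Q*P) = P*Q*P := by
      calc (P*Q)*(Q*P) = P*(Q*Q)*P := by noncomm_ring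
      _ = P*Q*P := by rw [hQ2]
    rw [h1]
    conv_rhs => rw [Matrix.trace_mul_comm, ← mul_assoc, hP2]
  refine ⟨∑ i, ∑ j, Complex.normSq (A j i),
    Finset.sum_nonneg fun i _ => Finset.sum_nonneg fun j _ => Complex.normSq_nonneg _, ?_⟩
  rw [key]
  simp only [Matrix.trace, Matrix.diag, Matrix.mul_apply, Matrix.conjTranspose_apply]
  push_cast
  congr 1; ext i; congr 1; ext j
  rw [Complex.normSq_eq_conj_mul_self, Complex.star_def]

/-- `π(C_{max,d}^s(nA+nB,m)) = C_{max,d}(nA,nB,m)`. -/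
theorem corner_image_CmaxD_sync (nA nB d m : ℕ)
    (hA : 1 ≤ nA) (hB : 1 ≤ nB) (hd : 1 ≤ d) (hm : 1 ≤ m) :
    corner '' {p : Fin (nA + nB) → Fin (nA + nB) → Fin m → Fin m → ℝ |
        p ∈ CmaxD (nA + nB) (nA + nB) m d ∧ Synchronous p} =
      CmaxD nA nB m d := by
  have hd0 : (d : ℂ) ≠ 0 := Nat.cast_ne_zero.mpr (by omega)
  ext q
  constructor
  · rintro ⟨p, ⟨⟨⟨hpos, hsum⟩, E, F, hE, hF, htr⟩, _⟩, rfl⟩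
    exact ⟨⟨fun x y i j => hpos _ _ i j, fun x y => hsum _ _⟩,
      fun x => E (Fin.castAdd nB x), fun y => F (Fin.natAdd nA y),
      fun x => hE _, fun y => hF _, fun x y i j => htr _ _ i j⟩
  · rintro ⟨⟨hpos, hsum⟩, E, F, hE, hF, htr⟩
    set G : Fin (nA + nB) → Fin m → Matrix (Fin d) (Fin d) ℂ :=
      fun z => Fin.addCases E F z with hGdef
    have hGl : ∀ x : Fin nA, G (Fin.castAdd nB x) = E x := fun x => Fin.addCases_left x
    have hGr : ∀ y : Fin nB, G (Fin.natAdd nA y) = F y := fun y => Fin.addCases_right y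
    have hG : ∀ z, IsPVM (G z) := by
      intro z
      refine Fin.addCases (fun x => ?_) (fun y => ?_) z
      · rw [hGl]; exact hE x
      · rw [hGr]; exact hF y
    set p : Fin (nA + nB) → Fin (nA + nB) → Fin m → Fin m → ℝ :=
      fun z w i j => ((1 / (d:ℂ)) * (G z i * G w j).trace).re with hpdef
    have htre : ∀ z w i j, 0 ≤ ((G z i * G w j).trace).re ∧
        (G z i * G w j).trace = (((G z i * G w j).trace).re : ℂ) := by
      intro z w i j
      obtain ⟨r, hr0, hr⟩ := trace_proj_proj (G z i) (G w j)
        ((hG z).1 i) ((hG z).2.1 i) ((hG w).1 j) ((hG w).2.1 j)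
      rw [hr]; simpa using hr0
    have hre : ∀ z w i j, (p z w i j : ℂ) = (1 / (d:ℂ)) * (G z i * G w j).trace := by
      intro z w i j
      obtain ⟨_, h2⟩ := htre z w i j
      show ((((1 / (d:ℂ)) * (G z i * G w j).trace).re : ℝ) : ℂ) = _
      rw [h2]
      push_cast
      simp [Complex.ext_iff]
    have hppos : ∀ z w i j, 0 ≤ p z w i j := by
      intro z w i j
      obtain ⟨h1, h2⟩ := htre z w i j
      show 0 ≤ ((1 / (d:ℂ)) * (G z i * G w j).trace).re
      rw [h2]
      have : ((1 / (d:ℂ)) * (((G z i * G w j).trace.re : ℝ) : ℂ)).re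
          = (1 / (d:ℝ)) * (G z i * G w j).trace.re := by
        push_cast; simp [Complex.ext_iff]
      rw [this]
      positivity
    have hpsum : ∀ z w, (∑ i, ∑ j, p z w i j) = 1 := by
      intro z w
      have hc : ((∑ i, ∑ j, p z w i j : ℝ) : ℂ) = 1 := by
        push_cast
        simp_rw [hre]
        have expand : ∑ x : Fin m, ∑ x1 : Fin m, (G z x * G w x1) = 1 := by
          rw [← Finset.sum_mul_sum, (hG z).2.2, (hG w).2.2, one_mul]
        calc ∑ x : Fin m, ∑ x1 : Fin m, (1/(d:ℂ)) * (G z x * G w x1).trace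
            = (1/(d:ℂ)) * (∑ x : Fin m, ∑ x1 : Fin m, (G z x * G w x1)).trace := by
              simp [Finset.mul_sum, Matrix.trace_sum]
          _ = 1 := by rw [expand, Matrix.trace_one]; simp [hd0]
      exact_mod_cast hc
    have hsync : Synchronous p := by
      intro z i j hij
      have e1 : ∑ j', (G z i * G z j').trace = (G z i).trace := by
        rw [← Matrix.trace_sum, ← Finset.mul_sum, (hG z).2.2, mul_one]
      have e3c : ∑ j' ∈ Finset.univ.erase i, (G z i * G z j').trace = 0 := by
        rw [← Finset.add_sum_erase _ _ (Finset.mem_univ i), (hG z).2.1] at e1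
        exact add_eq_left.mp e1
      have e3 : ∑ j' ∈ Finset.univ.erase i, ((G z i * G z j').trace).re = 0 := by
        have := congrArg Complex.re e3c
        simpa [Complex.re_sum] using this
      have e4 : ((G z i * G z j).trace).re = 0 := by
        have := (Finset.sum_eq_zero_iff_of_nonneg
          (fun j' _ => (htre z z i j').1)).mp e3 j (Finset.mem_erase.mpr ⟨(Ne.symm hij), Finset.mem_univ j⟩)
        exact this
      have e5 : (G z i * G z j).trace = 0 := by
        rw [(htre z z i j).2, e4]; simp
      show ((1 / (d:ℂ)) * (G z i * G z j).trace).re = 0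
      rw [e5]; simp
    refine ⟨p, ⟨⟨⟨hppos, hpsum⟩, G, G, hG, hG, hre⟩, hsync⟩, ?_⟩
    funext x y i j
    have : (corner p x y i j : ℂ) = (q x y i j : ℂ) := by
      show (p (Fin.castAdd nB x) (Fin.natAdd nA y) i j : ℂ) = _
      rw [hre, hGl, hGr, htr]
    exact_mod_cast this
end

section
/- The corner map π maps the convex hull of C_max^s(nA+nB, m) onto the convex hull of C_max(nA,nB,m), and maps the closure of C_max^s(nA+nB, m) onto the closure of C_max(nA,nB,m): π(convexHull ℝ (C_max^s(nA+nB,m))) = convexHull ℝ (C_max(nA,nB,m)) and π(closure(C_max^s(nA+nB,m))) = closure(C_max(nA,nB,m)). -/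
open scoped BigOperators

/-!
A correlation in `C_max` is given by PVMs `E` for Alice and `F` for Bob. Placing all of them on
one list of `nA + nB` PVMs and letting both players use that list gives a correlation on
`nA + nB` questions whose corner is the original one, and which is synchronous because the
projections of a single PVM are mutually orthogonal, so `Tr(E i * E j) = 0` for `i ≠ j`. Hence
`corner '' C_max^s(nA+nB,m) = C_max(nA,nB,m)`. The corner map is linear, so it commutes with
convex hulls, and continuous, so it commutes with closures of the bounded set `C_max^s`.
-/

open Matrix ComplexOrder

section Projections

variable {n : Type*} [Fintype n] {P Q : Matrix n n ℂ}

lemma trace_mul_eq_trace_conjTranspose_mul_self_of_isProj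
    (hP : P.IsHermitian) (hP2 : P * P = P) (hQ : Q.IsHermitian) (hQ2 : Q * Q = Q) :
    (P * Q).trace = ((Q * P)ᴴ * (Q * P)).trace := by
  rw [conjTranspose_mul, hP.eq, hQ.eq]
  calc (P * Q).trace = (P * (P * Q)).trace := by rw [← mul_assoc, hP2]
    _ = (P * Q * P).trace := trace_mul_comm _ _
    _ = (P * (Q * Q) * P).trace := by rw [hQ2]
    _ = (P * Q * (Q * P)).trace := by simp only [mul_assoc]

lemma trace_mul_nonneg_of_isProj
    (hP : P.IsHermitian) (hP2 : P * P = P) (hQ : Q.IsHermitian) (hQ2 : Q * Q = Q) :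
    0 ≤ (P * Q).trace := by
  rw [trace_mul_eq_trace_conjTranspose_mul_self_of_isProj hP hP2 hQ hQ2]
  exact (posSemidef_conjTranspose_mul_self _).trace_nonneg

end Projections

lemma IsPVM.mul_eq_zero {d m : ℕ} {E : Fin m → Matrix (Fin d) (Fin d) ℂ} (hE : IsPVM E)
    {i j : Fin m} (hij : i ≠ j) : E i * E j = 0 := by
  obtain ⟨hherm, hidem, hsum⟩ := hE
  -- `E j * (1 - E j) = 0` is a sum of the nonnegative traces `Tr(E j * E l) = ‖E l * E j‖²`.
  have hmul : ∑ l ∈ Finset.univ.erase j, E j * E l = 0 := by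
    rw [← Finset.mul_sum, Finset.sum_erase_eq_sub (Finset.mem_univ j), hsum, mul_sub, mul_one,
      hidem, sub_self]
  have htrace : ∑ l ∈ Finset.univ.erase j, (E j * E l).trace = 0 := by
    rw [← trace_sum, hmul, trace_zero]
  have hi := (Finset.sum_eq_zero_iff_of_nonneg fun l _ =>
    trace_mul_nonneg_of_isProj (hherm j) (hidem j) (hherm l) (hidem l)).1 htrace i
    (Finset.mem_erase.2 ⟨hij, Finset.mem_univ i⟩)
  rwa [trace_mul_eq_trace_conjTranspose_mul_self_of_isProj (hherm j) (hidem j) (hherm i)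
    (hidem i), trace_conjTranspose_mul_self_eq_zero_iff] at hi

section PVMCorrelation

variable {nA nB m d : ℕ}

noncomputable def pvmCorrelation (E : Fin nA → Fin m → Matrix (Fin d) (Fin d) ℂ)
    (F : Fin nB → Fin m → Matrix (Fin d) (Fin d) ℂ) : Fin nA → Fin nB → Fin m → Fin m → ℝ :=
  fun x y i j => (E x i * F y j).trace.re / d

variable {E : Fin nA → Fin m → Matrix (Fin d) (Fin d) ℂ}
  {F : Fin nB → Fin m → Matrix (Fin d) (Fin d) ℂ}

lemma ofReal_pvmCorrelation (hE : ∀ x, IsPVM (E x)) (hF : ∀ y, IsPVM (F y)) (x y i j) :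
    (pvmCorrelation E F x y i j : ℂ) = (1 / (d : ℂ)) * (E x i * F y j).trace := by
  have hnonneg := trace_mul_nonneg_of_isProj ((hE x).1 i) ((hE x).2.1 i) ((hF y).1 j)
    ((hF y).2.1 j)
  rw [pvmCorrelation, Complex.ofReal_div, Complex.ofReal_natCast,
    ← Complex.eq_re_of_ofReal_le (r := 0) (by rwa [Complex.ofReal_zero]), div_eq_inv_mul, one_div]

lemma pvmCorrelation_mem_Cmax (hd : 1 ≤ d) (hE : ∀ x, IsPVM (E x)) (hF : ∀ y, IsPVM (F y)) :
    pvmCorrelation E F ∈ Cmax nA nB m := by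
  have hnonneg : ∀ x y i j, 0 ≤ pvmCorrelation E F x y i j := fun x y i j =>
    div_nonneg (Complex.nonneg_iff.1 (trace_mul_nonneg_of_isProj ((hE x).1 i) ((hE x).2.1 i)
      ((hF y).1 j) ((hF y).2.1 j))).1 d.cast_nonneg
  have hsum : ∀ x y, ∑ i, ∑ j, pvmCorrelation E F x y i j = 1 := by
    intro x y
    have hd' : (d : ℂ) ≠ 0 := by exact_mod_cast (Nat.one_le_iff_ne_zero.1 hd)
    apply Complex.ofReal_injective
    push_cast
    simp_rw [ofReal_pvmCorrelation hE hF, ← Finset.mul_sum, ← trace_sum]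
    rw [← Finset.sum_mul_sum, (hE x).2.2, (hF y).2.2, mul_one, trace_one, Fintype.card_fin,
      one_div, inv_mul_cancel₀ hd']
  exact Set.mem_biUnion hd ⟨⟨hnonneg, hsum⟩, E, F, hE, hF, ofReal_pvmCorrelation hE hF⟩

end PVMCorrelation

lemma mem_Cmax_iff {nA nB m : ℕ} {p : Fin nA → Fin nB → Fin m → Fin m → ℝ} :
    p ∈ Cmax nA nB m ↔ ∃ d, 1 ≤ d ∧ ∃ (E : Fin nA → Fin m → Matrix (Fin d) (Fin d) ℂ)
      (F : Fin nB → Fin m → Matrix (Fin d) (Fin d) ℂ),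
      (∀ x, IsPVM (E x)) ∧ (∀ y, IsPVM (F y)) ∧ p = pvmCorrelation E F := by
  constructor
  · intro hp
    simp only [Cmax, Set.mem_iUnion] at hp
    obtain ⟨d, hd, -, E, F, hE, hF, hp⟩ := hp
    refine ⟨d, hd, E, F, hE, hF, funext fun x => funext fun y => funext fun i => funext fun j => ?_⟩
    apply Complex.ofReal_injective
    rw [hp, ofReal_pvmCorrelation hE hF]
  · rintro ⟨d, hd, E, F, hE, hF, rfl⟩
    exact pvmCorrelation_mem_Cmax hd hE hF

lemma corner_pvmCorrelation {nA nB m d : ℕ}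
    (G : Fin (nA + nB) → Fin m → Matrix (Fin d) (Fin d) ℂ) :
    corner (pvmCorrelation G G) =
      pvmCorrelation (fun x => G (Fin.castAdd nB x)) (fun y => G (Fin.natAdd nA y)) :=
  rfl

lemma pvmCorrelation_self_synchronous {n m d : ℕ} {G : Fin n → Fin m → Matrix (Fin d) (Fin d) ℂ}
    (hG : ∀ u, IsPVM (G u)) : Synchronous (pvmCorrelation G G) := by
  intro u i j hij
  simp [pvmCorrelation, (hG u).mul_eq_zero hij]

lemma corner_image_CmaxSync (nA nB m : ℕ) :
    corner '' CmaxSync (nA + nB) m = Cmax nA nB m := by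
  apply Set.Subset.antisymm
  · rintro _ ⟨p, ⟨hp, -⟩, rfl⟩
    obtain ⟨d, hd, G, G', hG, hG', rfl⟩ := mem_Cmax_iff.1 hp
    exact pvmCorrelation_mem_Cmax hd (fun x => hG _) (fun y => hG' _)
  · intro p hp
    obtain ⟨d, hd, E, F, hE, hF, rfl⟩ := mem_Cmax_iff.1 hp
    have hG : ∀ u, IsPVM (Fin.append E F u) :=
      Fin.addCases (fun x => by simpa using hE x) (fun y => by simpa using hF y)
    refine ⟨pvmCorrelation (Fin.append E F) (Fin.append E F),
      ⟨pvmCorrelation_mem_Cmax hd hG hG, pvmCorrelation_self_synchronous hG⟩, ?_⟩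
    simp only [corner_pvmCorrelation, Fin.append_left, Fin.append_right]

lemma IsCorrelation.mem_Icc {nA nB m : ℕ} {p : Fin nA → Fin nB → Fin m → Fin m → ℝ}
    (hp : IsCorrelation p) : p ∈ Set.Icc 0 1 := by
  refine ⟨fun x y i j => hp.1 x y i j, fun x y i j => ?_⟩
  calc p x y i j ≤ ∑ j', p x y i j' :=
        Finset.single_le_sum (fun j' _ => hp.1 x y i j') (Finset.mem_univ j)
    _ ≤ ∑ i', ∑ j', p x y i' j' :=
        Finset.single_le_sum (fun i' _ => Finset.sum_nonneg fun j' _ => hp.1 x y i' j')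
          (Finset.mem_univ i)
    _ = 1 := hp.2 x y

lemma Cmax_subset_Icc (nA nB m : ℕ) : Cmax nA nB m ⊆ Set.Icc 0 1 := by
  intro p hp
  simp only [Cmax, Set.mem_iUnion] at hp
  obtain ⟨d, -, hcorr, -⟩ := hp
  exact hcorr.mem_Icc

lemma isCompact_closure_CmaxSync (n m : ℕ) : IsCompact (closure (CmaxSync n m)) :=
  isCompact_Icc.of_isClosed_subset isClosed_closure
    (closure_minimal (fun _ hp => Cmax_subset_Icc n n m hp.1) isClosed_Icc)

def cornerₗ (nA nB m : ℕ) :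
    (Fin (nA + nB) → Fin (nA + nB) → Fin m → Fin m → ℝ) →ₗ[ℝ]
      (Fin nA → Fin nB → Fin m → Fin m → ℝ) where
  toFun := corner
  map_add' _ _ := rfl
  map_smul' _ _ := rfl

theorem corner_image_convexHull_and_closure_CmaxSync_general (nA nB m : ℕ) :
    corner '' (convexHull ℝ (CmaxSync (nA + nB) m)) = convexHull ℝ (Cmax nA nB m) ∧
    corner '' (closure (CmaxSync (nA + nB) m)) = closure (Cmax nA nB m) := by
  rw [← corner_image_CmaxSync]
  exact ⟨(cornerₗ nA nB m).image_convexHull _,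
    image_closure_of_isCompact (isCompact_closure_CmaxSync _ _)
      (cornerₗ nA nB m).continuous_of_finiteDimensional.continuousOn⟩

/-- the corner map sends the convex hull of `C_max^s(nA+nB,m)` onto the
convex hull of `C_max(nA,nB,m)`, and the closure of `C_max^s(nA+nB,m)` onto the closure
of `C_max(nA,nB,m)`. -/
theorem corner_image_convexHull_and_closure_CmaxSync (nA nB m : ℕ)
    (hA : 1 ≤ nA) (hB : 1 ≤ nB) (hm : 1 ≤ m) :
    corner '' (convexHull ℝ (CmaxSync (nA + nB) m)) = convexHull ℝ (Cmax nA nB m) ∧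
    corner '' (closure (CmaxSync (nA + nB) m)) = closure (Cmax nA nB m) :=
  corner_image_convexHull_and_closure_CmaxSync_general nA nB m
end

section
/- The image of C_loc^s(nA+nB, m) under the corner map π equals C_loc(nA,nB,m): π(C_loc^s(nA+nB, m)) = C_loc(nA,nB,m). -/
open scoped BigOperators

/-- The set of deterministic correlations. -/
def Deterministic (nA nB m : ℕ) : Set (Fin nA → Fin nB → Fin m → Fin m → ℝ) :=
  {p | ∃ (f : Fin nA → Fin m) (g : Fin nB → Fin m),
    ∀ x y i j, p x y i j =
      (if f x = i then (1 : ℝ) else 0) * (if g y = j then (1 : ℝ) else 0)}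

/-- The set `C_loc(nA,nB,m)` of local correlations. -/
def Cloc (nA nB m : ℕ) : Set (Fin nA → Fin nB → Fin m → Fin m → ℝ) :=
  convexHull ℝ (Deterministic nA nB m)


lemma corner_sum_smul {nA nB m : ℕ} {ι : Type} (t : Finset ι) (w : ι → ℝ)
    (z : ι → (Fin (nA + nB) → Fin (nA + nB) → Fin m → Fin m → ℝ)) :
    corner (∑ i ∈ t, w i • z i) = ∑ i ∈ t, w i • corner (z i) := by
  funext x y i j
  simp [corner, Finset.sum_apply, Pi.smul_apply]

/-- STATEMENT 14: `π(C_loc^s(nA+nB,m)) = C_loc(nA,nB,m)`. -/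
theorem corner_image_Cloc_sync (nA nB m : ℕ) (hA : 1 ≤ nA) (hB : 1 ≤ nB) (hm : 1 ≤ m) :
    corner '' {p : Fin (nA + nB) → Fin (nA + nB) → Fin m → Fin m → ℝ |
        p ∈ Cloc (nA + nB) (nA + nB) m ∧ Synchronous p} =
      Cloc nA nB m := by
  ext q
  constructor
  · rintro ⟨p, ⟨hp, _hsync⟩, rfl⟩
    rw [Cloc, convexHull_eq] at hp
    obtain ⟨ι, t, w, z, hw0, hw1, hz, rfl⟩ := hp
    rw [Finset.centerMass_eq_of_sum_1 _ _ hw1, corner_sum_smul]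
    rw [← Finset.centerMass_eq_of_sum_1 _ _ hw1]
    refine t.centerMass_mem_convexHull hw0 (by rw [hw1]; norm_num) ?_
    intro i hi
    obtain ⟨f, g, hfg⟩ := hz i hi
    refine ⟨f ∘ Fin.castAdd nB, g ∘ Fin.natAdd nA, ?_⟩
    intro x y a b
    simp [corner, hfg]
  · intro hq
    rw [Cloc, convexHull_eq] at hq
    obtain ⟨ι, t, w, z, hw0, hw1, hz, rfl⟩ := hq
    -- pick f, g for each deterministic correlation
    choose f g hfg using fun i (hi : i ∈ t) => hz i hi
    classical
    set lift : ι → (Fin (nA + nB) → Fin (nA + nB) → Fin m → Fin m → ℝ) := fun i =>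
      if hi : i ∈ t then
        (fun x y a b =>
          (if Fin.append (f i hi) (g i hi) x = a then (1 : ℝ) else 0) *
          (if Fin.append (f i hi) (g i hi) y = b then (1 : ℝ) else 0))
      else 0 with hlift
    refine ⟨∑ i ∈ t, w i • lift i, ⟨?_, ?_⟩, ?_⟩
    · rw [← Finset.centerMass_eq_of_sum_1 _ _ hw1]
      refine t.centerMass_mem_convexHull hw0 (by rw [hw1]; norm_num) ?_
      intro i hi
      exact ⟨Fin.append (f i hi) (g i hi), Fin.append (f i hi) (g i hi), by
        simp [hlift, dif_pos hi]⟩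
    · intro x a b hab
      simp only [Finset.sum_apply, Pi.smul_apply, smul_eq_mul]
      refine Finset.sum_eq_zero fun i hi => ?_
      simp only [hlift, dif_pos hi]
      rcases eq_or_ne (Fin.append (f i hi) (g i hi) x) a with h | h
      · simp [h, hab]
      · simp [h]
    · rw [corner_sum_smul, Finset.centerMass_eq_of_sum_1 _ _ hw1]
      refine Finset.sum_congr rfl fun i hi => ?_
      congr 1
      funext x y a b
      simp [corner, hlift, dif_pos hi, Fin.append_left, Fin.append_right, hfg i hi]
end

section
/- Let p be a correlation with (p x y i j : ℂ) = (1/d)·Tr(P x i * Q y j) for POVMs (P x ·)_{x ∈ Fin nA} and (Q y ·)_{y ∈ Fin nB} with m outcomes on ℂ^d, such that P x i * P x j = P x j * P x i and Q y i * Q y j = Q y j * Q y i for all x, y, i, j. Then for every ε > 0 there exists q ∈ C_max(nA,nB,m) with |p x y i j − q x y i j| < ε for all x, y, i, j. -/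
open scoped BigOperators

open scoped ComplexOrder in
/-- A positive operator-valued measure with `m` outcomes on `ℂ^d`. -/
def IsPOVM {d m : ℕ} (P : Fin m → Matrix (Fin d) (Fin d) ℂ) : Prop :=
  (∀ i, (P i).PosSemidef) ∧ (∑ i, P i = 1)


/-!
Commuting Hermitian matrices are simultaneously unitarily diagonalisable, so
`P x i = U x * diagonal (α x · i) * (U x)ᴴ` with probability vectors `α x k`, and then
`p x y i j = d⁻¹ ∑ k l, α x k i * β y l j * |((U x)ᴴ * V y) k l|²`, where the weights
`|((U x)ᴴ * V y) k l|²` form a doubly stochastic matrix. Rounding every `α x k` and `β y l` to an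
average of `N` vertices of the simplex (coordinatewise error `< 1/N`) moves `p` by at most `2/N`.
The rounded correlation is maximally entangled in dimension `d N²`: Alice and Bob each get a
private register `ℂ^N`, the `s`-th basis vector of a register selects the `s`-th vertex of the
average, and the maximally entangled state averages over both registers independently.
-/

open Matrix Module
open scoped Kronecker

theorem LinearMap.IsSymmetric.exists_orthonormalBasis_eigenvectors_of_commute
    {𝕜 E ι : Type*} [RCLike 𝕜] [NormedAddCommGroup E] [InnerProductSpace 𝕜 E]
    [FiniteDimensional 𝕜 E] {T : ι → Module.End 𝕜 E} (hT : ∀ i, (T i).IsSymmetric)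
    (hC : Pairwise fun i j => Commute (T i) (T j)) :
    ∃ (b : OrthonormalBasis (Fin (finrank 𝕜 E)) 𝕜 E) (μ : Fin (finrank 𝕜 E) → ι → 𝕜),
      ∀ i k, T i (b k) = μ k i • b k := by
  classical
  have hV := directSum_isInternal_of_pairwise_commute hT hC
  let c := hV.collectedBasis fun χ => (stdOrthonormalBasis 𝕜 _).toBasis
  let e := c.indexEquiv (Module.finBasis 𝕜 E)
  have hc : Orthonormal 𝕜 (c.reindex e) := by
    simpa [c] using ((orthogonalFamily_iInf_eigenspaces hT).orthonormal_sigma_orthonormal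
      fun χ => (stdOrthonormalBasis 𝕜 _).orthonormal).comp _ e.symm.injective
  refine ⟨(c.reindex e).toOrthonormalBasis hc, fun k => (e.symm k).1, fun i k => ?_⟩
  have hmem := hV.collectedBasis_mem (fun χ => (stdOrthonormalBasis 𝕜 _).toBasis) (e.symm k)
  simpa [c] using Module.End.mem_eigenspace_iff.mp ((Submodule.mem_iInf _).mp hmem i)

namespace Matrix

variable {n : Type*} [Fintype n] [DecidableEq n]

theorem exists_unitary_diagonal_of_commute {𝕜 ι : Type*} [RCLike 𝕜] {A : ι → Matrix n n 𝕜}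
    (hA : ∀ i, (A i).IsHermitian) (hC : Pairwise fun i j => Commute (A i) (A j)) :
    ∃ U ∈ unitaryGroup n 𝕜, ∃ μ : ι → n → 𝕜, ∀ i, A i = U * diagonal (μ i) * Uᴴ := by
  obtain ⟨b, μ, hb⟩ := LinearMap.IsSymmetric.exists_orthonormalBasis_eigenvectors_of_commute
    (T := fun i => toEuclideanLin (A i)) (fun i => isSymmetric_toEuclideanLin_iff.mpr (hA i))
    fun i j hij => by
      simp only [Commute, SemiconjBy, Module.End.mul_eq_comp, ← toLpLin_mul, (hC hij).eq]
  let e := finCongr (finrank_euclideanSpace (𝕜 := 𝕜) (ι := n)) |>.trans (Fintype.equivFin n).symm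
  let U := (EuclideanSpace.basisFun n 𝕜).toBasis.toMatrix (b.reindex e)
  have hU : U ∈ unitaryGroup n 𝕜 :=
    (EuclideanSpace.basisFun n 𝕜).toMatrix_orthonormalBasis_mem_unitary _
  refine ⟨U, hU, fun i k => μ (e.symm k) i, fun i => ?_⟩
  have hAU : A i * U = U * diagonal fun k => μ (e.symm k) i := by
    ext a k
    rw [mul_diagonal]
    simpa [U, Basis.toMatrix_apply, mul_apply, mulVec, dotProduct, mul_comm]
      using congrArg (· a) (hb i (e.symm k))
  rw [← hAU, mul_assoc, ← star_eq_conjTranspose, Unitary.mul_star_self_of_mem hU, mul_one]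

theorem submatrix_mem_unitaryGroup {n' : Type*} [Fintype n'] [DecidableEq n'] (e : n' ≃ n)
    {U : Matrix n n ℂ} (hU : U ∈ unitaryGroup n ℂ) : U.submatrix e e ∈ unitaryGroup n' ℂ := by
  rw [mem_unitaryGroup_iff, star_eq_conjTranspose, conjTranspose_submatrix, submatrix_mul_equiv,
    ← star_eq_conjTranspose, mem_unitaryGroup_iff.mp hU, submatrix_one_equiv]

theorem sum_normSq_apply_of_mem_unitaryGroup {W : Matrix n n ℂ} (hW : W ∈ unitaryGroup n ℂ)
    (k : n) : ∑ l, Complex.normSq (W k l) = 1 := by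
  have := congrFun (congrFun (mem_unitaryGroup_iff.mp hW) k) k
  simp only [mul_apply, star_apply, RCLike.star_def, Complex.mul_conj, one_apply_eq] at this
  exact_mod_cast this

theorem trace_diagonal_mul_diagonal_mul_conjTranspose (W : Matrix n n ℂ) (a b : n → ℂ) :
    (diagonal a * W * diagonal b * Wᴴ).trace = ∑ k, ∑ l, a k * b l * Complex.normSq (W k l) := by
  simp only [trace, diag, mul_apply (N := Wᴴ), mul_diagonal, diagonal_mul, conjTranspose_apply]
  refine Finset.sum_congr rfl fun k _ => Finset.sum_congr rfl fun l _ => ?_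
  rw [Complex.normSq_eq_conj_mul_self, RCLike.star_def]
  ring

theorem trace_conj_diagonal_mul_conj_diagonal (U V : Matrix n n ℂ) (a b : n → ℂ) :
    (U * diagonal a * Uᴴ * (V * diagonal b * Vᴴ)).trace =
      ∑ k, ∑ l, a k * b l * Complex.normSq ((Uᴴ * V) k l) := by
  rw [← trace_diagonal_mul_diagonal_mul_conjTranspose, conjTranspose_mul,
    conjTranspose_conjTranspose, show U * diagonal a * Uᴴ * (V * diagonal b * Vᴴ) =
      U * (diagonal a * Uᴴ * V * diagonal b * Vᴴ) by simp only [mul_assoc], trace_mul_comm]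
  simp only [mul_assoc]

end Matrix

open scoped ComplexOrder in
theorem IsPOVM.exists_unitary_diagonal_of_commute {d m : ℕ}
    {P : Fin m → Matrix (Fin d) (Fin d) ℂ} (hP : IsPOVM P)
    (hC : Pairwise fun i j => Commute (P i) (P j)) :
    ∃ U ∈ unitaryGroup (Fin d) ℂ, ∃ α : Fin d → Fin m → ℝ, (∀ k, α k ∈ stdSimplex ℝ (Fin m)) ∧
      ∀ i, P i = U * diagonal (fun k => (α k i : ℂ)) * Uᴴ := by
  obtain ⟨U, hU, μ, hPU⟩ :=
    Matrix.exists_unitary_diagonal_of_commute (fun i => (hP.1 i).isHermitian) hC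
  have hUU : Uᴴ * U = 1 := by rw [← star_eq_conjTranspose]; exact Unitary.star_mul_self_of_mem hU
  have hdiag : ∀ i, diagonal (μ i) = Uᴴ * P i * U := fun i => by
    rw [hPU i, ← mul_assoc, ← mul_assoc, hUU, one_mul, mul_assoc, hUU, mul_one]
  have hpos : ∀ i k, 0 ≤ μ i k := fun i =>
    posSemidef_diagonal_iff.mp (hdiag i ▸ (hP.1 i).conjTranspose_mul_mul_same U)
  have hsum : ∀ k, ∑ i, μ i k = 1 := fun k => by
    have : ∑ i, diagonal (μ i) = 1 := by
      simp_rw [hdiag, ← Finset.sum_mul, ← Finset.mul_sum, hP.2, mul_one, hUU]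
    simpa [Matrix.sum_apply] using congrFun (congrFun this k) k
  refine ⟨U, hU, fun k i => (μ i k).re,
    fun k => ⟨fun i => (Complex.nonneg_iff.mp (hpos i k)).1, ?_⟩, fun i => ?_⟩
  · simpa using congrArg Complex.re (hsum k)
  · simp_rw [← Complex.eq_re_of_ofReal_le (hpos i _)]
    exact hPU i

theorem isPVM_diagonal_single {d m : ℕ} (c : Fin d → Fin m) :
    IsPVM fun i => diagonal fun a => ((Pi.single (c a) 1 : Fin m → ℝ) i : ℂ) := by
  refine ⟨fun i => isHermitian_diagonal_of_self_adjoint _ ?_, fun i => ?_, ?_⟩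
  · ext a; simp
  · rw [diagonal_mul_diagonal]
    congr 1; ext a
    rcases eq_or_ne i (c a) with rfl | h <;> simp [*]
  · ext a b
    rcases eq_or_ne a b with rfl | h
    · simp [Matrix.sum_apply, Pi.single_apply, apply_ite]
    · simp [Matrix.sum_apply, h]

theorem IsPVM.conj_unitary {d m : ℕ} {E : Fin m → Matrix (Fin d) (Fin d) ℂ} (hE : IsPVM E)
    {W : Matrix (Fin d) (Fin d) ℂ} (hW : W ∈ unitaryGroup (Fin d) ℂ) :
    IsPVM fun i => W * E i * Wᴴ := by
  have hWW : Wᴴ * W = 1 := by rw [← star_eq_conjTranspose]; exact Unitary.star_mul_self_of_mem hW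
  refine ⟨fun i => isHermitian_mul_mul_conjTranspose W (hE.1 i), fun i => ?_, ?_⟩
  · simp only [mul_assoc, ← mul_assoc Wᴴ, hWW, one_mul, ← mul_assoc (E i) (E i), hE.2.1 i]
  · rw [← Finset.sum_mul, ← Finset.mul_sum, hE.2.2, mul_one, ← star_eq_conjTranspose,
      Unitary.mul_star_self_of_mem hW]

theorem abs_mul_sub_mul_le_of_mem_Icc {a a' b b' : ℝ} (ha : a ∈ Set.Icc 0 1)
    (hb' : b' ∈ Set.Icc 0 1) : |a * b - a' * b'| ≤ |b - b'| + |a - a'| := by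
  have ha1 : |a| ≤ 1 := abs_le.mpr ⟨by linarith [ha.1], ha.2⟩
  have hb1 : |b'| ≤ 1 := abs_le.mpr ⟨by linarith [hb'.1], hb'.2⟩
  calc |a * b - a' * b'| = |a * (b - b') + (a - a') * b'| := by congr 1; ring
    _ ≤ |a| * |b - b'| + |a - a'| * |b'| := by rw [← abs_mul, ← abs_mul]; exact abs_add_le _ _
    _ ≤ |b - b'| + |a - a'| := add_le_add (mul_le_of_le_one_left (abs_nonneg _) ha1)
        (mul_le_of_le_one_right (abs_nonneg _) hb1)

section diagonalCorrelation

variable {nA nB m : ℕ} {n : Type*} [Fintype n]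

noncomputable def diagonalCorrelation (U : Fin nA → Matrix n n ℂ) (V : Fin nB → Matrix n n ℂ)
    (α : Fin nA → n → Fin m → ℝ) (β : Fin nB → n → Fin m → ℝ) :
    Fin nA → Fin nB → Fin m → Fin m → ℝ := fun x y i j =>
  (Fintype.card n : ℝ)⁻¹ * ∑ k, ∑ l, α x k i * β y l j * Complex.normSq (((U x)ᴴ * V y) k l)

variable {U : Fin nA → Matrix n n ℂ} {V : Fin nB → Matrix n n ℂ}
  {α α' : Fin nA → n → Fin m → ℝ} {β β' : Fin nB → n → Fin m → ℝ}

theorem ofReal_diagonalCorrelation [DecidableEq n] (x : Fin nA) (y : Fin nB) (i j : Fin m) :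
    (diagonalCorrelation U V α β x y i j : ℂ) = 1 / (Fintype.card n : ℂ) *
      (U x * diagonal (fun k => (α x k i : ℂ)) * (U x)ᴴ *
        (V y * diagonal (fun l => (β y l j : ℂ)) * (V y)ᴴ)).trace := by
  rw [trace_conj_diagonal_mul_conj_diagonal, diagonalCorrelation]
  push_cast
  ring

theorem diagonalCorrelation_submatrix {n' : Type*} [Fintype n'] (e : n' ≃ n) :
    diagonalCorrelation (fun x => (U x).submatrix e e) (fun y => (V y).submatrix e e)
      (fun x k => α x (e k)) (fun y l => β y (e l)) = diagonalCorrelation U V α β := by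
  ext x y i j
  simp only [diagonalCorrelation, conjTranspose_submatrix, submatrix_mul_equiv, submatrix_apply,
    Fintype.card_congr e]
  rw [← e.sum_comp]
  exact congrArg _ <| Finset.sum_congr rfl fun k _ =>
    e.sum_comp fun l => α x (e k) i * β y l j * Complex.normSq (((U x)ᴴ * V y) (e k) l)

theorem diagonalCorrelation_kronecker_one {S T : Type*} [Fintype S] [Fintype T] [DecidableEq S]
    [DecidableEq T] (φ : Fin nA → n → S → Fin m → ℝ) (ψ : Fin nB → n → T → Fin m → ℝ) :
    diagonalCorrelation (fun x => U x ⊗ₖ (1 : Matrix (S × T) (S × T) ℂ)) (fun y => V y ⊗ₖ 1)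
      (fun x a => φ x a.1 a.2.1) (fun y b => ψ y b.1 b.2.2) =
    diagonalCorrelation U V (fun x k => (Fintype.card S : ℝ)⁻¹ • ∑ s, φ x k s)
      (fun y l => (Fintype.card T : ℝ)⁻¹ • ∑ t, ψ y l t) := by
  ext x y i j
  simp only [diagonalCorrelation, conjTranspose_kronecker, conjTranspose_one, ← mul_kronecker_mul,
    mul_one, Fintype.sum_prod_type, kronecker_apply, one_apply, Prod.mk.injEq,
    apply_ite Complex.normSq, Complex.normSq_zero, mul_ite, mul_zero, ite_and, Finset.sum_ite_irrel,
    Finset.sum_const_zero, Finset.sum_ite_eq, Finset.mem_univ, if_true, Fintype.card_prod,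
    Pi.smul_apply, Finset.sum_apply, smul_eq_mul, Finset.mul_sum, Finset.sum_mul,
    Finset.sum_comm (s := (Finset.univ : Finset S)) (t := (Finset.univ : Finset n)),
    Finset.sum_comm (s := (Finset.univ : Finset T)) (t := (Finset.univ : Finset n))]
  refine Finset.sum_congr rfl fun k _ => Finset.sum_congr rfl fun l _ => ?_
  rw [Finset.sum_comm]
  refine Finset.sum_congr rfl fun t _ => Finset.sum_congr rfl fun s _ => ?_
  push_cast
  ring

variable [DecidableEq n]

theorem isCorrelation_diagonalCorrelation [Nonempty n] (hU : ∀ x, U x ∈ unitaryGroup n ℂ)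
    (hV : ∀ y, V y ∈ unitaryGroup n ℂ) (hα : ∀ x k, α x k ∈ stdSimplex ℝ (Fin m))
    (hβ : ∀ y l, β y l ∈ stdSimplex ℝ (Fin m)) : IsCorrelation (diagonalCorrelation U V α β) := by
  refine ⟨fun x y i j => ?_, fun x y => ?_⟩
  · exact mul_nonneg (by positivity) <| Finset.sum_nonneg fun k _ => Finset.sum_nonneg fun l _ =>
      mul_nonneg (mul_nonneg ((hα x k).1 i) ((hβ y l).1 j)) (Complex.normSq_nonneg _)
  · have hW := sum_normSq_apply_of_mem_unitaryGroup (mul_mem (Unitary.star_mem (hU x)) (hV y))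
    calc ∑ i, ∑ j, diagonalCorrelation U V α β x y i j
        = (Fintype.card n : ℝ)⁻¹ * ∑ k, ∑ l, (∑ i, α x k i) * (∑ j, β y l j) *
            Complex.normSq (((U x)ᴴ * V y) k l) := by
          simp only [diagonalCorrelation, Finset.sum_mul, Finset.mul_sum,
            Finset.sum_comm (s := (Finset.univ : Finset (Fin m))) (t := (Finset.univ : Finset n))]
          exact Finset.sum_congr rfl fun k _ => Finset.sum_congr rfl fun l _ => Finset.sum_comm
      _ = 1 := by
          simp only [fun k => (hα x k).2, fun l => (hβ y l).2, one_mul, ← star_eq_conjTranspose,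
            hW, Finset.sum_const, Finset.card_univ, nsmul_eq_mul, mul_one]
          field_simp

theorem abs_diagonalCorrelation_sub_le [Nonempty n] (hU : ∀ x, U x ∈ unitaryGroup n ℂ)
    (hV : ∀ y, V y ∈ unitaryGroup n ℂ) (hα : ∀ x k, α x k ∈ stdSimplex ℝ (Fin m))
    (hβ' : ∀ y l, β' y l ∈ stdSimplex ℝ (Fin m)) {δ : ℝ}
    (hαα' : ∀ x k i, |α x k i - α' x k i| ≤ δ) (hββ' : ∀ y l j, |β y l j - β' y l j| ≤ δ)
    (x : Fin nA) (y : Fin nB) (i j : Fin m) :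
    |diagonalCorrelation U V α β x y i j - diagonalCorrelation U V α' β' x y i j| ≤ 2 * δ := by
  have hW := sum_normSq_apply_of_mem_unitaryGroup (mul_mem (Unitary.star_mem (hU x)) (hV y))
  have hterm : ∀ k l, |α x k i * β y l j - α' x k i * β' y l j| ≤ 2 * δ := fun k l =>
    (abs_mul_sub_mul_le_of_mem_Icc (mem_Icc_of_mem_stdSimplex (hα x k) i)
      (mem_Icc_of_mem_stdSimplex (hβ' y l) j)).trans (by linarith [hαα' x k i, hββ' y l j])
  calc |diagonalCorrelation U V α β x y i j - diagonalCorrelation U V α' β' x y i j|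
      = (Fintype.card n : ℝ)⁻¹ * |∑ k, ∑ l, (α x k i * β y l j - α' x k i * β' y l j) *
          Complex.normSq (((U x)ᴴ * V y) k l)| := by
        simp only [diagonalCorrelation, ← mul_sub, ← Finset.sum_sub_distrib, sub_mul, abs_mul,
          abs_of_nonneg (inv_nonneg.mpr (Nat.cast_nonneg _ : (0 : ℝ) ≤ Fintype.card n))]
    _ ≤ (Fintype.card n : ℝ)⁻¹ * ∑ k, ∑ l, 2 * δ * Complex.normSq (((U x)ᴴ * V y) k l) := by
        gcongr
        refine (Finset.abs_sum_le_sum_abs _ _).trans (Finset.sum_le_sum fun k _ => ?_)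
        refine (Finset.abs_sum_le_sum_abs _ _).trans (Finset.sum_le_sum fun l _ => ?_)
        rw [abs_mul, abs_of_nonneg (Complex.normSq_nonneg _)]
        exact mul_le_mul_of_nonneg_right (hterm k l) (Complex.normSq_nonneg _)
    _ = 2 * δ := by
        simp only [← Finset.mul_sum, ← star_eq_conjTranspose, hW, Finset.sum_const,
          Finset.card_univ, nsmul_eq_mul, mul_one]
        field_simp

theorem diagonalCorrelation_single_mem_Cmax [Nonempty n] (hU : ∀ x, U x ∈ unitaryGroup n ℂ)
    (hV : ∀ y, V y ∈ unitaryGroup n ℂ) (c : Fin nA → n → Fin m) (c' : Fin nB → n → Fin m) :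
    diagonalCorrelation U V (fun x k => Pi.single (c x k) 1) (fun y l => Pi.single (c' y l) 1) ∈
      Cmax nA nB m := by
  set e := (Fintype.equivFin n).symm
  rw [← diagonalCorrelation_submatrix e]
  have hU' := fun x => submatrix_mem_unitaryGroup e (hU x)
  have hV' := fun y => submatrix_mem_unitaryGroup e (hV y)
  refine Set.mem_iUnion₂.mpr ⟨Fintype.card n, Fintype.card_pos, ?_, ?_⟩
  · exact isCorrelation_diagonalCorrelation hU' hV' (fun x k => single_mem_stdSimplex ℝ _)
      (fun y l => single_mem_stdSimplex ℝ _)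
  · refine ⟨_, _, fun x => (isPVM_diagonal_single fun k => c x (e k)).conj_unitary (hU' x),
      fun y => (isPVM_diagonal_single fun l => c' y (e l)).conj_unitary (hV' y), fun x y i j => ?_⟩
    rw [ofReal_diagonalCorrelation, Fintype.card_fin]

end diagonalCorrelation

theorem exists_nat_sum_eq_abs_mul_sub_lt_one {m : ℕ} {v : Fin m → ℝ}
    (hv : v ∈ stdSimplex ℝ (Fin m)) (N : ℕ) :
    ∃ a : Fin m → ℕ, ∑ i, a i = N ∧ ∀ i, |N * v i - a i| < 1 := by
  -- `a i = ⌊N C (i + 1)⌋ - ⌊N C i⌋` for the partial sums `C` of `v`; these telescope to `⌊N⌋`.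
  let w : ℕ → ℝ := fun t => if h : t < m then v ⟨t, h⟩ else 0
  let C : ℕ → ℝ := fun t => ∑ s ∈ Finset.range t, w s
  let F : ℕ → ℕ := fun t => ⌊N * C t⌋₊
  have hC_succ : ∀ t, C (t + 1) = C t + w t := fun t => Finset.sum_range_succ w t
  have hw : ∀ t, 0 ≤ w t := fun t => by
    simp only [w]; split_ifs
    exacts [hv.1 _, le_rfl]
  have hC0 : ∀ t, 0 ≤ C t := fun t => Finset.sum_nonneg fun s _ => hw s
  have hF : Monotone F := monotone_nat_of_le_succ fun t =>
    Nat.floor_mono (by rw [hC_succ]; nlinarith [hw t, (N.cast_nonneg : (0 : ℝ) ≤ N)])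
  have hCm : C m = 1 := by
    rw [← hv.2, show C m = ∑ s ∈ Finset.range m, w s from rfl, ← Fin.sum_univ_eq_sum_range]
    exact Finset.sum_congr rfl fun i _ => dif_pos i.isLt
  refine ⟨fun i => F (i + 1) - F i, ?_, fun i => ?_⟩
  · rw [Fin.sum_univ_eq_sum_range (fun t => F (t + 1) - F t), Finset.sum_range_tsub hF]
    simp [F, C, hCm]
  · have hvi : v i = w i := by simp [w]
    have h1 := Nat.floor_le (mul_nonneg N.cast_nonneg (hC0 i))
    have h2 := Nat.lt_floor_add_one ((N : ℝ) * C i)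
    have h3 := Nat.floor_le (mul_nonneg N.cast_nonneg (hC0 (i + 1)))
    have h4 := Nat.lt_floor_add_one ((N : ℝ) * C (i + 1))
    have hY : (N : ℝ) * C (i + 1) = N * C i + N * w i := by rw [hC_succ]; ring
    rw [Nat.cast_sub (hF (Nat.le_succ i)), hvi, abs_sub_lt_iff]
    constructor <;> linarith

theorem exists_sum_single_eq {m : ℕ} (a : Fin m → ℕ) :
    ∃ f : Fin (∑ i, a i) → Fin m, ∑ s, (Pi.single (f s) 1 : Fin m → ℝ) = fun i => (a i : ℝ) := by
  refine ⟨fun s => (finSigmaFinEquiv.symm s).1, ?_⟩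
  rw [finSigmaFinEquiv.symm.sum_comp (fun σ => (Pi.single σ.1 1 : Fin m → ℝ)), Fintype.sum_sigma]
  ext j
  simp [Finset.sum_apply, Pi.single_apply]

theorem exists_average_single_approx {m : ℕ} {v : Fin m → ℝ} (hv : v ∈ stdSimplex ℝ (Fin m))
    {N : ℕ} (hN : 0 < N) : ∃ f : Fin N → Fin m,
      ∀ i, |v i - ((N : ℝ)⁻¹ • ∑ s, (Pi.single (f s) 1 : Fin m → ℝ)) i| < (N : ℝ)⁻¹ := by
  obtain ⟨a, rfl, ha⟩ := exists_nat_sum_eq_abs_mul_sub_lt_one hv N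
  obtain ⟨f, hf⟩ := exists_sum_single_eq a
  refine ⟨f, fun i => ?_⟩
  set M : ℝ := ((∑ i, a i : ℕ) : ℝ)
  have hM : 0 < M := Nat.cast_pos.mpr hN
  rw [hf, Pi.smul_apply, smul_eq_mul, show v i - M⁻¹ * a i = (M * v i - a i) / M by field_simp,
    abs_div, abs_of_pos hM, div_lt_iff₀ hM, inv_mul_cancel₀ hM.ne']
  exact ha i

theorem average_single_mem_stdSimplex {m : ℕ} {S : Type*} [Fintype S] [Nonempty S]
    (f : S → Fin m) :
    (Fintype.card S : ℝ)⁻¹ • ∑ s, (Pi.single (f s) 1 : Fin m → ℝ) ∈ stdSimplex ℝ (Fin m) := by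
  rw [Finset.smul_sum]
  exact (convex_stdSimplex ℝ _).sum_mem (fun _ _ => by positivity)
    (by simp [Finset.card_univ]) fun s _ => single_mem_stdSimplex ℝ _

theorem commuting_povm_approx_Cmax_general {nA nB m d : ℕ} (hd : 1 ≤ d)
    (p : Fin nA → Fin nB → Fin m → Fin m → ℝ)
    (P : Fin nA → Fin m → Matrix (Fin d) (Fin d) ℂ)
    (Q : Fin nB → Fin m → Matrix (Fin d) (Fin d) ℂ)
    (hP : ∀ x, IsPOVM (P x)) (hQ : ∀ y, IsPOVM (Q y))
    (hrep : ∀ x y i j, (p x y i j : ℂ) = (1 / (d : ℂ)) * (P x i * Q y j).trace)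
    (hPcomm : ∀ x i j, P x i * P x j = P x j * P x i)
    (hQcomm : ∀ y i j, Q y i * Q y j = Q y j * Q y i) :
    ∀ ε > (0 : ℝ), ∃ q ∈ Cmax nA nB m,
      ∀ x y i j, |p x y i j - q x y i j| < ε := by
  intro ε hε
  have : Nonempty (Fin d) := ⟨⟨0, hd⟩⟩
  choose U hU α hα hPU using fun x =>
    (hP x).exists_unitary_diagonal_of_commute fun i j _ => hPcomm x i j
  choose V hV β hβ hQV using fun y =>
    (hQ y).exists_unitary_diagonal_of_commute fun i j _ => hQcomm y i j
  have hp : p = diagonalCorrelation U V α β := by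
    ext x y i j
    apply Complex.ofReal_injective
    rw [hrep, ofReal_diagonalCorrelation, Fintype.card_fin, hPU, hQV]
  obtain ⟨N, hN⟩ := exists_nat_one_div_lt (half_pos hε)
  choose f hf using fun x k => exists_average_single_approx (hα x k) N.add_one_pos
  choose g hg using fun y l => exists_average_single_approx (hβ y l) N.add_one_pos
  have hkron := diagonalCorrelation_kronecker_one (U := U) (V := V)
    (fun x k s => (Pi.single (f x k s) 1 : Fin m → ℝ))
    (fun y l t => (Pi.single (g y l t) 1 : Fin m → ℝ))
  rw [Fintype.card_fin] at hkron
  refine ⟨_, hkron ▸ diagonalCorrelation_single_mem_Cmax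
    (fun x => kronecker_mem_unitary (hU x) (one_mem _))
    (fun y => kronecker_mem_unitary (hV y) (one_mem _)) _ _, fun x y i j => ?_⟩
  rw [hp]
  refine (abs_diagonalCorrelation_sub_le hU hV hα
    (fun y l => by simpa using average_single_mem_stdSimplex (g y l))
    (fun x k i => (hf x k i).le) (fun y l j => (hg y l j).le) x y i j).trans_lt ?_
  rw [one_div] at hN
  push_cast
  linarith

/-- STATEMENT 17: a correlation realized by commuting POVMs on `ℂ^d` can be approximated
arbitrarily well by maximally entangled correlations. -/
theorem commuting_povm_approx_Cmax {nA nB m d : ℕ} (hd : 1 ≤ d)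
    (p : Fin nA → Fin nB → Fin m → Fin m → ℝ) (hcorr : IsCorrelation p)
    (P : Fin nA → Fin m → Matrix (Fin d) (Fin d) ℂ)
    (Q : Fin nB → Fin m → Matrix (Fin d) (Fin d) ℂ)
    (hP : ∀ x, IsPOVM (P x)) (hQ : ∀ y, IsPOVM (Q y))
    (hrep : ∀ x y i j, (p x y i j : ℂ) = (1 / (d : ℂ)) * (P x i * Q y j).trace)
    (hPcomm : ∀ x i j, P x i * P x j = P x j * P x i)
    (hQcomm : ∀ y i j, Q y i * Q y j = Q y j * Q y i) :
    ∀ ε > (0 : ℝ), ∃ q ∈ Cmax nA nB m,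
      ∀ x y i j, |p x y i j - q x y i j| < ε :=
  commuting_povm_approx_Cmax_general hd p P Q hP hQ hrep hPcomm hQcomm
end
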